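/- arXiv:2403.11970 — 10 statements merged into one kernel-verified Lean document; each statement's English description precedes it below -/
import Mathlib

section
/- Let D ≥ 1, let E : Fin D → ℝ be a family of real numbers (energy eigenvalues) satisfying the k-th no-resonance condition, and let c : Fin D → ℂ. Define the time-evolved components ψ_j(t) = c_j · exp(−i·E_j·t). Then for every pair of tuples α, β : Fin k → Fin D, the limit lim_{T→∞} (1/T) ∫₀^T ∏_{j} ψ_{α_j}(t) · conj(ψ_{β_j}(t)) dt exists, and it equals ∏_j |c_{α_j}|² if β is a rearrangement of α (i.e., there exists a permutation σ of Fin k with β = α ∘ σ), and equals 0 otherwise. -/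
/-!
The integrand is the constant `∏ⱼ c_{αⱼ} conj(c_{βⱼ})` times the single phase `exp(-iωt)` with
`ω = ∑ⱼ E_{αⱼ} - ∑ⱼ E_{βⱼ}`. The time average of a phase is `1` if `ω = 0` and `0` otherwise, because
for `ω ≠ 0` its integral over `[0, T]` stays bounded by `2 / |ω|`. By no-resonance, `ω = 0` exactly
when `β` is a rearrangement of `α`, and then the constant is `∏ⱼ |c_{αⱼ}|²`.
-/

open Filter MeasureTheory

/-- The `k`-th no-resonance condition for a family of energy levels `E : Fin D → ℝ`. -/
def NoResonance (D k : ℕ) (E : Fin D → ℝ) : Prop :=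
  ∀ α β : Fin k → Fin D, (∑ j, E (α j)) = (∑ j, E (β j)) →
    ∃ σ : Equiv.Perm (Fin k), β = α ∘ σ

open Complex Topology

lemma mul_conj_exp_eq (a b : ℂ) (x y t : ℝ) :
    a * exp (-(I * x * t)) * (starRingEnd ℂ) (b * exp (-(I * y * t)))
      = a * (starRingEnd ℂ) b * exp (-(I * (x - y : ℝ)) * t) := by
  rw [map_mul, ← exp_conj, mul_mul_mul_comm, ← exp_add]
  congr 2
  simp only [map_neg, map_mul, conj_I, conj_ofReal]
  push_cast
  ring

lemma prod_mul_conj_exp_eq {ι κ : Type*} [Fintype κ] (c : ι → ℂ) (E : ι → ℝ) (α β : κ → ι)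
    (t : ℝ) :
    ∏ j, c (α j) * exp (-(I * E (α j) * t)) * (starRingEnd ℂ) (c (β j) * exp (-(I * E (β j) * t)))
      = (∏ j, c (α j) * (starRingEnd ℂ) (c (β j))) *
          exp (-(I * ((∑ j, E (α j)) - ∑ j, E (β j) : ℝ)) * t) := by
  simp only [mul_conj_exp_eq, Finset.prod_mul_distrib, ← exp_sum]
  congr 2
  push_cast
  rw [← Finset.sum_sub_distrib, ← Finset.sum_mul, Finset.sum_neg_distrib, ← Finset.mul_sum]

lemma norm_integral_exp_neg_I_mul_le {ω : ℝ} (hω : ω ≠ 0) (T : ℝ) :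
    ‖∫ t in (0:ℝ)..T, exp (-(I * ω) * t)‖ ≤ 2 / |ω| := by
  have hc : -(I * ω) ≠ 0 := by simpa using hω
  have h_unit (s : ℝ) : ‖exp (-(I * ω) * s)‖ = 1 := by
    rw [norm_exp]; simp
  rw [integral_exp_mul_complex hc, norm_div]
  gcongr
  · calc _ ≤ ‖exp (-(I * ω) * T)‖ + ‖exp (-(I * ω) * (0:ℝ))‖ := norm_sub_le _ _
      _ = 2 := by rw [h_unit, h_unit]; norm_num
  · simp

lemma tendsto_one_div_mul_of_norm_le {f : ℝ → ℂ} {C : ℝ} (hf : ∀ T, ‖f T‖ ≤ C) :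
    Tendsto (fun T : ℝ => (1 / T : ℂ) * f T) atTop (𝓝 0) := by
  have h_inv : Tendsto (fun T : ℝ => (1 / T : ℂ)) atTop (𝓝 0) := by
    simpa [Function.comp_def] using (continuous_ofReal.tendsto 0).comp tendsto_inv_atTop_zero
  exact h_inv.zero_mul_isBoundedUnder_le ⟨C, eventually_map.mpr (Eventually.of_forall hf)⟩

lemma tendsto_average_exp_neg_I_mul (ω : ℝ) :
    Tendsto (fun T : ℝ => (1 / T : ℂ) * ∫ t in (0:ℝ)..T, exp (-(I * ω) * t)) atTop
      (𝓝 (if ω = 0 then 1 else 0)) := by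
  split_ifs with hω
  · refine tendsto_const_nhds.congr' ?_
    filter_upwards [eventually_ne_atTop 0] with T hT
    simp [hω, hT]
  · exact tendsto_one_div_mul_of_norm_le (norm_integral_exp_neg_I_mul_le hω)

lemma prod_mul_conj_comp_perm {ι κ : Type*} [Fintype κ] (c : ι → ℂ) (α : κ → ι)
    (σ : Equiv.Perm κ) :
    ∏ j, c (α j) * (starRingEnd ℂ) (c (α (σ j))) = ∏ j, (normSq (c (α j)) : ℂ) := by
  rw [Finset.prod_mul_distrib, Equiv.prod_comp σ fun j => (starRingEnd ℂ) (c (α j)),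
    ← Finset.prod_mul_distrib]
  simp only [mul_conj]

lemma NoResonance.exists_perm_iff_sum_eq {D k : ℕ} {E : Fin D → ℝ} (hNR : NoResonance D k E)
    (α β : Fin k → Fin D) :
    (∃ σ : Equiv.Perm (Fin k), β = α ∘ σ) ↔ ∑ j, E (α j) = ∑ j, E (β j) := by
  refine ⟨?_, hNR α β⟩
  rintro ⟨σ, rfl⟩
  exact (Equiv.sum_comp σ fun j => E (α j)).symm

theorem temporal_ensemble_eq_random_phase_ensemble_general
    (D k : ℕ) (E : Fin D → ℝ) (hNR : NoResonance D k E)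
    (c : Fin D → ℂ) (ψ : Fin D → ℝ → ℂ)
    (hψ : ∀ j t, ψ j t = c j * Complex.exp (-(Complex.I * (E j : ℂ) * (t : ℂ))))
    (α β : Fin k → Fin D) :
    Tendsto
      (fun T : ℝ => (1 / T : ℂ) *
        ∫ t in (0:ℝ)..T, ∏ j, ψ (α j) t * (starRingEnd ℂ) (ψ (β j) t))
      atTop
      (nhds (if ∃ σ : Equiv.Perm (Fin k), β = α ∘ σ
              then ∏ j, (Complex.normSq (c (α j)) : ℂ) else 0)) := by
  set ω : ℝ := (∑ j, E (α j)) - ∑ j, E (β j)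
  set A : ℂ := ∏ j, c (α j) * (starRingEnd ℂ) (c (β j))
  have h_integrand (t : ℝ) :
      ∏ j, ψ (α j) t * (starRingEnd ℂ) (ψ (β j) t) = A * exp (-(I * ω) * t) := by
    simp only [hψ]
    exact prod_mul_conj_exp_eq c E α β t
  simp_rw [h_integrand, intervalIntegral.integral_const_mul, mul_left_comm _ A]
  convert (tendsto_average_exp_neg_I_mul ω).const_mul A using 2
  by_cases h_perm : ∃ σ : Equiv.Perm (Fin k), β = α ∘ σ
  · have hω : ω = 0 := sub_eq_zero.mpr ((hNR.exists_perm_iff_sum_eq α β).mp h_perm)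
    rw [if_pos h_perm, if_pos hω, mul_one]
    obtain ⟨σ, rfl⟩ := h_perm
    exact (prod_mul_conj_comp_perm c α σ).symm
  · have hω : ω ≠ 0 := fun h => h_perm ((hNR.exists_perm_iff_sum_eq α β).mpr (sub_eq_zero.mp h))
    rw [if_neg h_perm, if_neg hω, mul_zero]

/-- If the eigenvalues satisfy the `k`-th no-resonance condition, then the infinite-time
average of `∏ⱼ ψ_{αⱼ}(t) conj(ψ_{βⱼ}(t))` exists and equals `∏ⱼ |c_{αⱼ}|²` when `β` is a
rearrangement of `α`, and `0` otherwise. -/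
theorem temporal_ensemble_eq_random_phase_ensemble
    (D k : ℕ) (hD : 1 ≤ D) (E : Fin D → ℝ) (hNR : NoResonance D k E)
    (c : Fin D → ℂ) (ψ : Fin D → ℝ → ℂ)
    (hψ : ∀ j t, ψ j t = c j * Complex.exp (-(Complex.I * (E j : ℂ) * (t : ℂ))))
    (α β : Fin k → Fin D) :
    Tendsto
      (fun T : ℝ => (1 / T : ℂ) *
        ∫ t in (0:ℝ)..T, ∏ j, ψ (α j) t * (starRingEnd ℂ) (ψ (β j) t))
      atTop
      (nhds (if ∃ σ : Equiv.Perm (Fin k), β = α ∘ σ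
              then ∏ j, (Complex.normSq (c (α j)) : ℂ) else 0)) :=
  temporal_ensemble_eq_random_phase_ensemble_general D k E hNR c ψ hψ α β
end

section
/- Let D ≥ 1, let E : Fin D → ℝ be pairwise distinct, and let c : Fin D → ℂ with c_j ≠ 0 for every j. Define ψ_j(t) = c_j · exp(−i·E_j·t). Suppose that for every pair of tuples α, β : Fin k → Fin D, the limit lim_{T→∞} (1/T) ∫₀^T ∏_j ψ_{α_j}(t) · conj(ψ_{β_j}(t)) dt exists and equals ∏_j |c_{α_j}|² when β is a rearrangement of α, and equals 0 otherwise. Then E satisfies the k-th no-resonance condition. -/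
open Filter MeasureTheory

/-- Converse direction: if the eigenvalues are pairwise distinct, all overlaps `cⱼ` are
nonzero, and all `k`-th temporal moment entries equal those of the random phase ensemble,
then the `k`-th no-resonance condition holds. -/
theorem no_resonance_of_temporal_ensemble_eq_random_phase
    (D k : ℕ) (hD : 1 ≤ D) (E : Fin D → ℝ) (hE : Function.Injective E)
    (c : Fin D → ℂ) (hc : ∀ j, c j ≠ 0) (ψ : Fin D → ℝ → ℂ)
    (hψ : ∀ j t, ψ j t = c j * Complex.exp (-(Complex.I * (E j : ℂ) * (t : ℂ))))
    (hmom : ∀ α β : Fin k → Fin D,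
      Tendsto
        (fun T : ℝ => (1 / T : ℂ) *
          ∫ t in (0:ℝ)..T, ∏ j, ψ (α j) t * (starRingEnd ℂ) (ψ (β j) t))
        atTop
        (nhds (if ∃ σ : Equiv.Perm (Fin k), β = α ∘ σ
                then ∏ j, (Complex.normSq (c (α j)) : ℂ) else 0))) :
    NoResonance D k E := by
  intro α β hsum
  by_contra h
  have hmom' := hmom α β
  rw [if_neg h] at hmom'
  set K : ℂ := ∏ j, c (α j) * (starRingEnd ℂ) (c (β j)) with hKdef
  have hK : K ≠ 0 := by
    refine Finset.prod_ne_zero_iff.mpr fun j _ => mul_ne_zero (hc _) ?_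
    simpa using hc (β j)
  have hprod : ∀ t : ℝ, (∏ j, ψ (α j) t * (starRingEnd ℂ) (ψ (β j) t)) = K := by
    intro t
    have h1 : ∀ j, ψ (α j) t * (starRingEnd ℂ) (ψ (β j) t)
        = (c (α j) * (starRingEnd ℂ) (c (β j))) *
          Complex.exp (Complex.I * (t : ℂ) * (((E (β j) : ℂ)) - (E (α j) : ℂ))) := by
      intro j
      rw [hψ, hψ, map_mul, ← Complex.exp_conj]
      simp only [map_neg, map_mul, Complex.conj_I, Complex.conj_ofReal]
      rw [mul_mul_mul_comm, ← Complex.exp_add]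
      congr 1
      ring
    calc (∏ j, ψ (α j) t * (starRingEnd ℂ) (ψ (β j) t))
        = ∏ j, (c (α j) * (starRingEnd ℂ) (c (β j))) *
            Complex.exp (Complex.I * (t : ℂ) * (((E (β j) : ℂ)) - (E (α j) : ℂ))) := by
          exact Finset.prod_congr rfl fun j _ => h1 j
      _ = K * Complex.exp (∑ j, Complex.I * (t : ℂ) * (((E (β j) : ℂ)) - (E (α j) : ℂ))) := by
          rw [Finset.prod_mul_distrib, Complex.exp_sum]
      _ = K := by
          have : (∑ j, Complex.I * (t : ℂ) * (((E (β j) : ℂ)) - (E (α j) : ℂ))) = 0 := by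
            rw [← Finset.mul_sum]
            have : (∑ j, (((E (β j) : ℂ)) - (E (α j) : ℂ))) = 0 := by
              rw [Finset.sum_sub_distrib]
              have hb : (∑ j, ((E (β j) : ℂ))) = ((∑ j, E (β j) : ℝ) : ℂ) := by
                push_cast; ring
              have ha : (∑ j, ((E (α j) : ℂ))) = ((∑ j, E (α j) : ℝ) : ℂ) := by
                push_cast; ring
              rw [hb, ha, hsum, sub_self]
            rw [this, mul_zero]
          rw [this, Complex.exp_zero, mul_one]
  have hconst : Tendsto
      (fun T : ℝ => (1 / T : ℂ) *
        ∫ t in (0:ℝ)..T, ∏ j, ψ (α j) t * (starRingEnd ℂ) (ψ (β j) t))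
      atTop (nhds K) := by
    have heq : ∀ᶠ T : ℝ in atTop,
        (1 / T : ℂ) * (∫ t in (0:ℝ)..T, ∏ j, ψ (α j) t * (starRingEnd ℂ) (ψ (β j) t)) = K := by
      filter_upwards [eventually_gt_atTop (0:ℝ)] with T hT
      have : (∫ t in (0:ℝ)..T, ∏ j, ψ (α j) t * (starRingEnd ℂ) (ψ (β j) t))
          = (T : ℂ) * K := by
        rw [intervalIntegral.integral_congr (fun t _ => hprod t)]
        simp [intervalIntegral.integral_const, sub_zero, Complex.real_smul]
      rw [this]
      have hT0 : (T : ℂ) ≠ 0 := by exact_mod_cast hT.ne'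
      field_simp
    exact tendsto_const_nhds.congr' (heq.mono fun T hT => hT.symm)
  exact hK (tendsto_nhds_unique hconst hmom')
end

section
/- Let D ≥ 1, k ≥ 1, and c : Fin D → ℂ with ∑_j |c_j|² = 1. Consider the complex matrices indexed by tuples Fin k → Fin D: let R be the matrix with entries R_{α,β} = ∏_j |c_{α_j}|² if there exists a permutation σ of Fin k with β = α ∘ σ, and 0 otherwise (the k-th moment of the random phase ensemble); and let S be the matrix with entries S_{α,β} = ∏_j |c_{α_j}|² · N(α,β), where N(α,β) is the number of permutations σ of Fin k with β = α ∘ σ (i.e., S = ρ_d^{⊗k} ∑_{σ ∈ S_k} Perm(σ) with ρ_d = diag(|c_j|²)). Then the trace norm (sum of singular values) of R − S is at most k! · exp(π·√(2k/3)) · ∑_j |c_j|⁴. -/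
/-!
`S - R` is positive semidefinite: both matrices live on pairs `(α, β)` in the same
`S_k`-orbit, and `S - R = F (∑_σ Perm σ) F` for a real diagonal `F`, where `∑_σ Perm σ` is `k!`
times the projection onto symmetric tensors. Hence its trace norm is its trace
`∑_α p_α (|Stab α| - 1) = ∑_{σ ≠ 1} ∑_{α ∘ σ = α} p_α`, with `p_α = ∏_j |c_{α_j}|²`. A tuple fixed by
`σ ≠ 1` has `α_i = α_{σ i}` for some `i ≠ σ i`, so each inner sum is at most the collision
probability `∑_j |c_j|⁴`. This gives the bound `k! ∑_j |c_j|⁴`, and `exp (π √(2k/3)) ≥ 1`.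
-/

open Matrix
open scoped ComplexOrder

/-- The trace norm (sum of singular values) of a complex square matrix, defined as the
trace of the positive semidefinite square root of `Mᴴ * M`. -/
noncomputable def traceNorm {n : Type*} [Fintype n] [DecidableEq n]
    (M : Matrix n n ℂ) : ℝ :=
  (((Matrix.posSemidef_conjTranspose_mul_self M).1.eigenvectorUnitary : Matrix n n ℂ) *
    Matrix.diagonal (((↑) : ℝ → ℂ) ∘ (√·) ∘ (Matrix.posSemidef_conjTranspose_mul_self M).1.eigenvalues) *
    (star (Matrix.posSemidef_conjTranspose_mul_self M).1.eigenvectorUnitary : Matrix n n ℂ)).trace.re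

open Finset Equiv
open scoped Nat

theorem traceNorm_eq_re_trace_of_mul_self_eq {n : Type*} [Fintype n] [DecidableEq n]
    {M A : Matrix n n ℂ} (hA : A.PosSemidef) (h : A * A = Mᴴ * M) :
    traceNorm M = A.trace.re := by
  open scoped MatrixOrder in
  have hMM := (posSemidef_conjTranspose_mul_self M).1
  open scoped MatrixOrder in
  have hsqrt : hMM.cfc Real.sqrt = A := by
    rw [← hMM.cfc_eq, ← cfcₙ_eq_cfc (hf0 := Real.sqrt_zero), ← CFC.sqrt_eq_real_sqrt _
      (nonneg_iff_posSemidef.2 (posSemidef_conjTranspose_mul_self M))]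
    exact CFC.sqrt_unique h (nonneg_iff_posSemidef.2 hA)
  rw [← hsqrt]
  rfl

theorem traceNorm_neg_of_posSemidef {n : Type*} [Fintype n] [DecidableEq n]
    {A : Matrix n n ℂ} (hA : A.PosSemidef) : traceNorm (-A) = A.trace.re :=
  traceNorm_eq_re_trace_of_mul_self_eq hA (by rw [conjTranspose_neg, neg_mul_neg, hA.1.eq])

section TuplePermutation

variable {X : Type*} {k : ℕ}

theorem eq_comp_perm_iff (α β : Fin k → X) (σ : Perm (Fin k)) :
    β = α ∘ σ ↔ α = β ∘ ⇑σ⁻¹ := by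
  rw [Perm.coe_inv, Equiv.eq_comp_symm, eq_comm]

variable [DecidableEq X]

def permCount (α β : Fin k → X) : ℕ :=
  #{σ : Perm (Fin k) | β = α ∘ σ}

theorem permCount_eq_zero {α β : Fin k → X}
    (h : ¬∃ σ : Perm (Fin k), β = α ∘ σ) : permCount α β = 0 := by
  simp only [permCount, Finset.card_eq_zero, filter_eq_empty_iff]
  exact fun σ _ hσ => h ⟨σ, hσ⟩

theorem permCount_comm (α β : Fin k → X) : permCount α β = permCount β α :=
  card_equiv (Equiv.inv _) fun σ => by simp [eq_comp_perm_iff α β]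

theorem permCount_comp_right (α : Fin k → X) (σ₀ : Perm (Fin k)) :
    permCount α (α ∘ σ₀) = permCount α α :=
  card_equiv (Equiv.mulRight σ₀⁻¹) fun σ => by
    simp only [mem_filter, mem_univ, true_and, coe_mulRight, Perm.coe_mul, ← Function.comp_assoc,
      Perm.coe_inv, Equiv.eq_comp_symm]

theorem permCount_comp_self (α : Fin k → X) (σ₀ : Perm (Fin k)) :
    permCount (α ∘ σ₀) (α ∘ σ₀) = permCount α α :=
  calc permCount (α ∘ σ₀) (α ∘ σ₀) = permCount (α ∘ σ₀) ((α ∘ σ₀) ∘ ⇑σ₀⁻¹) :=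
        (permCount_comp_right _ _).symm
    _ = permCount α (α ∘ σ₀) := by
        rw [permCount_comm, Function.comp_assoc, Perm.coe_inv, Equiv.self_comp_symm,
          Function.comp_id]
    _ = permCount α α := permCount_comp_right _ _

theorem one_le_permCount_self (α : Fin k → X) : 1 ≤ permCount α α :=
  card_pos.2 ⟨1, by simp⟩

/-- `Perm(σ)` in the paper's notation. -/
def tuplePermMatrix (R : Type*) [Zero R] [One R] (σ : Perm (Fin k)) :
    Matrix (Fin k → X) (Fin k → X) R :=
  of fun α β => if β = α ∘ σ then 1 else 0

theorem tuplePermMatrix_mul [Fintype X] {R : Type*} [Semiring R]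
    (σ τ : Perm (Fin k)) :
    (tuplePermMatrix R σ * tuplePermMatrix R τ : Matrix (Fin k → X) _ R) =
      tuplePermMatrix R (σ * τ) := by
  ext α β
  simp only [tuplePermMatrix, mul_apply, of_apply, ite_mul, one_mul, zero_mul, sum_ite_eq',
    mem_univ, if_true, Perm.coe_mul, Function.comp_assoc]
  congr

theorem conjTranspose_tuplePermMatrix {R : Type*} [Semiring R] [StarRing R]
    (σ : Perm (Fin k)) :
    (tuplePermMatrix R σ : Matrix (Fin k → X) _ R)ᴴ = tuplePermMatrix R σ⁻¹ := by
  ext α β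
  simp only [tuplePermMatrix, conjTranspose_apply, of_apply, eq_comp_perm_iff β α]
  split_ifs <;> simp

def permSum (R : Type*) [AddCommMonoid R] [One R] :
    Matrix (Fin k → X) (Fin k → X) R :=
  ∑ σ : Perm (Fin k), tuplePermMatrix R σ

theorem permSum_apply {R : Type*} [AddCommMonoidWithOne R] (α β : Fin k → X) :
    permSum R α β = permCount α β := by
  simp [permSum, tuplePermMatrix, permCount, Matrix.sum_apply, sum_boole]

theorem conjTranspose_permSum {R : Type*} [Semiring R] [StarRing R] :
    (permSum R : Matrix (Fin k → X) _ R)ᴴ = permSum R := by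
  simp only [permSum, conjTranspose_sum, conjTranspose_tuplePermMatrix]
  exact Equiv.sum_comp (Equiv.inv _) _

theorem permSum_mul_self [Fintype X] {R : Type*} [Semiring R] :
    (permSum R * permSum R : Matrix (Fin k → X) _ R) = k ! • permSum R := by
  have hshift (σ : Perm (Fin k)) :
      ∑ τ, tuplePermMatrix R (σ * τ) = (permSum R : Matrix (Fin k → X) _ R) :=
    Equiv.sum_comp (Equiv.mulLeft σ) _
  simp only [permSum, sum_mul_sum, tuplePermMatrix_mul] at hshift ⊢
  rw [sum_congr rfl fun σ _ => hshift σ, sum_const, Finset.card_univ, Fintype.card_perm,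
    Fintype.card_fin]

theorem posSemidef_permSum [Fintype X] :
    (permSum ℂ : Matrix (Fin k → X) _ ℂ).PosSemidef := by
  -- `permSum / k!` is the orthogonal projection onto symmetric tensors
  have hT : permSum ℂ = (k ! : ℝ)⁻¹ • ((permSum ℂ)ᴴ * permSum ℂ : Matrix (Fin k → X) _ ℂ) := by
    rw [conjTranspose_permSum, permSum_mul_self, ← Nat.cast_smul_eq_nsmul ℝ, smul_smul,
      inv_mul_cancel₀ (by positivity), one_smul]
  rw [hT]
  exact (posSemidef_conjTranspose_mul_self _).smul (by positivity)

end TuplePermutation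

section TupleWeight

variable {R X : Type*} {k : ℕ}

def tupleWeight [CommMonoid R] (q : X → R) (α : Fin k → X) : R :=
  ∏ j, q (α j)

theorem tupleWeight_comp [CommMonoid R] (q : X → R) (α : Fin k → X) (σ : Perm (Fin k)) :
    tupleWeight q (α ∘ σ) = tupleWeight q α :=
  Equiv.prod_comp σ fun j => q (α j)

theorem tupleWeight_nonneg [CommSemiring R] [PartialOrder R] [IsOrderedRing R] {q : X → R}
    (hq0 : 0 ≤ q) (α : Fin k → X) : 0 ≤ tupleWeight q α :=
  prod_nonneg fun j _ => hq0 (α j)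

variable [Fintype X] [DecidableEq X]

theorem sum_tupleWeight_of_apply_eq [CommSemiring R] (q : X → R) (hq : ∑ x, q x = 1)
    {i i' : Fin k} (h : i ≠ i') :
    ∑ α : Fin k → X, (if α i = α i' then tupleWeight q α else 0) = ∑ x, q x ^ 2 := by
  set s : Finset (Fin k) := {i, i'}
  -- the indicator of `α i = x = α i'` is split over the coordinates, so that the sum over
  -- tuples factors as a product of sums over `X`
  let g (x : X) (j : Fin k) (y : X) : R := q y * if j ∈ s then (if y = x then 1 else 0) else 1
  have hg (α : Fin k → X) :
      (if α i = α i' then tupleWeight q α else 0) = ∑ x, ∏ j, g x j (α j) := by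
    simp only [g, tupleWeight, prod_mul_distrib, ← mul_sum, prod_ite_mem, univ_inter, s,
      prod_pair h, ite_mul, one_mul, zero_mul]
    simp [eq_comm]
  have hgsum (x : X) (j : Fin k) : ∑ y, g x j y = if j ∈ s then q x else 1 := by
    split_ifs with hj <;> simp [g, hj, hq]
  calc ∑ α : Fin k → X, (if α i = α i' then tupleWeight q α else 0)
      = ∑ x, ∏ j, ∑ y, g x j y := by
        simp only [hg, Fintype.prod_sum]
        exact sum_comm
    _ = ∑ x, q x ^ 2 := by
        simp only [hgsum, prod_ite_mem, univ_inter, prod_const, s, card_pair h]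

variable [CommRing R] [PartialOrder R] [IsOrderedRing R]

theorem sum_tupleWeight_of_comp_eq_le (q : X → R) (hq0 : 0 ≤ q) (hq : ∑ x, q x = 1)
    {σ : Perm (Fin k)} (hσ : σ ≠ 1) :
    ∑ α : Fin k → X, (if α = α ∘ σ then tupleWeight q α else 0) ≤ ∑ x, q x ^ 2 := by
  obtain ⟨i, hi⟩ : ∃ i, σ i ≠ i := by
    by_contra! hfix
    exact hσ (Equiv.ext hfix)
  calc ∑ α : Fin k → X, (if α = α ∘ σ then tupleWeight q α else 0)
      ≤ ∑ α : Fin k → X, (if α (σ i) = α i then tupleWeight q α else 0) := by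
        refine sum_le_sum fun α _ => ?_
        by_cases hα : α = α ∘ σ
        · have hcoll : α (σ i) = α i := (congrFun hα i).symm
          rw [if_pos hα, if_pos hcoll]
        · rw [if_neg hα]
          split_ifs
          exacts [tupleWeight_nonneg hq0 α, le_rfl]
    _ = ∑ x, q x ^ 2 := sum_tupleWeight_of_apply_eq q hq hi

theorem sum_tupleWeight_mul_permCount_sub_one_le (q : X → R) (hq0 : 0 ≤ q)
    (hq : ∑ x, q x = 1) :
    ∑ α : Fin k → X, tupleWeight q α * ((permCount α α : R) - 1) ≤ k ! * ∑ x, q x ^ 2 := by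
  have hcount (α : Fin k → X) : (permCount α α : R) - 1 =
      ∑ σ ∈ (univ : Finset (Perm (Fin k))).erase 1, if α = α ∘ ⇑σ then 1 else 0 := by
    rw [permCount, ← sum_boole, ← add_sum_erase _ _ (mem_univ 1)]
    simp
  calc ∑ α : Fin k → X, tupleWeight q α * ((permCount α α : R) - 1)
      = ∑ σ ∈ (univ : Finset (Perm (Fin k))).erase 1,
          ∑ α : Fin k → X, if α = α ∘ ⇑σ then tupleWeight q α else 0 := by
        simp only [hcount, mul_sum, mul_ite, mul_one, mul_zero]
        exact sum_comm
    _ ≤ ∑ σ ∈ univ.erase (1 : Perm (Fin k)), ∑ x, q x ^ 2 :=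
        sum_le_sum fun σ hσ => sum_tupleWeight_of_comp_eq_le q hq0 hq (ne_of_mem_erase hσ)
    _ ≤ k ! * ∑ x, q x ^ 2 := by
        rw [sum_const, nsmul_eq_mul]
        refine mul_le_mul_of_nonneg_right ?_ (sum_nonneg fun x _ => pow_nonneg (hq0 x) 2)
        have := card_erase_le (s := (univ : Finset (Perm (Fin k)))) (a := 1)
        rw [Finset.card_univ, Fintype.card_perm, Fintype.card_fin] at this
        exact Nat.mono_cast this

end TupleWeight

section RandomPhase

variable {X : Type*} [DecidableEq X] {k : ℕ}

def randomPhaseMoment (q : X → ℝ) : Matrix (Fin k → X) (Fin k → X) ℂ :=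
  of fun α β => if ∃ σ : Perm (Fin k), β = α ∘ σ then ((tupleWeight q α : ℝ) : ℂ) else 0

variable [Fintype X]

/-- `ρ_d^{⊗k} ∑_{σ ∈ S_k} Perm(σ)`, with `ρ_d = diagonal q`. -/
def randomPhaseProductForm (q : X → ℝ) : Matrix (Fin k → X) (Fin k → X) ℂ :=
  diagonal (fun α => ((tupleWeight q α : ℝ) : ℂ)) * permSum ℂ

theorem randomPhaseProductForm_sub_randomPhaseMoment {q : X → ℝ} (hq : 0 ≤ q) :
    randomPhaseProductForm q - (randomPhaseMoment q : Matrix (Fin k → X) _ ℂ) =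
      diagonal (fun α => (√(tupleWeight q α * (1 - (permCount α α : ℝ)⁻¹)) : ℂ)) * permSum ℂ *
        diagonal (fun α => (√(tupleWeight q α * (1 - (permCount α α : ℝ)⁻¹)) : ℂ)) := by
  -- both sides vanish off the orbits, and `tupleWeight`, `permCount α α` are constant on them
  ext α β
  simp only [randomPhaseProductForm, randomPhaseMoment, Matrix.sub_apply, diagonal_mul,
    mul_diagonal, permSum_apply, of_apply]
  by_cases h : ∃ σ : Perm (Fin k), β = α ∘ σ
  · obtain ⟨σ, rfl⟩ := h
    rw [if_pos ⟨σ, rfl⟩, permCount_comp_right, permCount_comp_self, tupleWeight_comp]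
    have hm : (1 : ℝ) ≤ permCount α α := by exact_mod_cast one_le_permCount_self α
    have hsq := Real.mul_self_sqrt
      (mul_nonneg (tupleWeight_nonneg hq α) (sub_nonneg.2 (inv_le_one_of_one_le₀ hm)))
    norm_cast
    rw [mul_right_comm, hsq]
    field_simp
  · rw [if_neg h, permCount_eq_zero h]
    simp

theorem posSemidef_randomPhaseProductForm_sub_randomPhaseMoment {q : X → ℝ} (hq : 0 ≤ q) :
    (randomPhaseProductForm q - (randomPhaseMoment q : Matrix (Fin k → X) _ ℂ)).PosSemidef := by
  rw [randomPhaseProductForm_sub_randomPhaseMoment hq]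
  have hself (v : (Fin k → X) → ℝ) :
      (diagonal fun α => (v α : ℂ))ᴴ = diagonal fun α => (v α : ℂ) := by
    simp [diagonal_conjTranspose]
  nth_rewrite 1 [← hself]
  exact posSemidef_permSum.conjTranspose_mul_mul_same _

theorem trace_randomPhaseProductForm_sub_randomPhaseMoment (q : X → ℝ) :
    (randomPhaseProductForm q - (randomPhaseMoment q : Matrix (Fin k → X) _ ℂ)).trace =
      ((∑ α : Fin k → X, tupleWeight q α * ((permCount α α : ℝ) - 1) : ℝ) : ℂ) := by
  have hrefl (α : Fin k → X) : ∃ σ : Perm (Fin k), α = α ∘ σ := ⟨1, rfl⟩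
  simp only [trace, Matrix.diag, randomPhaseProductForm, randomPhaseMoment, Matrix.sub_apply,
    diagonal_mul, permSum_apply, of_apply, hrefl, if_true]
  push_cast
  simp only [mul_sub, mul_one]

end RandomPhase

theorem random_phase_moment_product_form_general
    (D k : ℕ) (c : Fin D → ℂ)
    (hc : (∑ j, Complex.normSq (c j)) = 1)
    (R S : Matrix (Fin k → Fin D) (Fin k → Fin D) ℂ)
    (hR : ∀ α β, R α β =
      if ∃ σ : Equiv.Perm (Fin k), β = α ∘ σ
        then ∏ j, (Complex.normSq (c (α j)) : ℂ) else 0)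
    (hS : ∀ α β, S α β =
      (∏ j, (Complex.normSq (c (α j)) : ℂ)) *
        ((Finset.univ.filter fun σ : Equiv.Perm (Fin k) => β = α ∘ σ).card : ℂ)) :
    traceNorm (R - S) ≤
      (k.factorial : ℝ) * Real.exp (Real.pi * Real.sqrt (2 * k / 3)) *
        ∑ j, (Complex.normSq (c j)) ^ 2 := by
  set q : Fin D → ℝ := fun j => Complex.normSq (c j)
  have hq : 0 ≤ q := fun j => Complex.normSq_nonneg (c j)
  have hR' : R = randomPhaseMoment q := by
    ext α β
    simp [hR, randomPhaseMoment, tupleWeight, q]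
  have hS' : S = randomPhaseProductForm q := by
    ext α β
    simp [hS, randomPhaseProductForm, diagonal_mul, permSum_apply, permCount, tupleWeight, q]
  rw [hR', hS', ← neg_sub, traceNorm_neg_of_posSemidef
    (posSemidef_randomPhaseProductForm_sub_randomPhaseMoment hq),
    trace_randomPhaseProductForm_sub_randomPhaseMoment, Complex.ofReal_re]
  calc ∑ α : Fin k → Fin D, tupleWeight q α * ((permCount α α : ℝ) - 1)
      ≤ k ! * ∑ j, q j ^ 2 := sum_tupleWeight_mul_permCount_sub_one_le q hq hc
    _ ≤ k ! * Real.exp (Real.pi * Real.sqrt (2 * k / 3)) * ∑ j, q j ^ 2 := by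
        gcongr
        exact le_mul_of_one_le_right (by positivity) (Real.one_le_exp (by positivity))

/-- Asymptotic product form of the `k`-th moment of the random phase ensemble: the trace
distance between the exact `k`-th moment `R` and the product form
`S = ρ_d^{⊗k} ∑_{σ ∈ S_k} Perm(σ)` is bounded by `k! exp(π √(2k/3)) tr(ρ_d²)`. -/
theorem random_phase_moment_product_form
    (D k : ℕ) (hD : 1 ≤ D) (hk : 1 ≤ k) (c : Fin D → ℂ)
    (hc : (∑ j, Complex.normSq (c j)) = 1)
    (R S : Matrix (Fin k → Fin D) (Fin k → Fin D) ℂ)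
    (hR : ∀ α β, R α β =
      if ∃ σ : Equiv.Perm (Fin k), β = α ∘ σ
        then ∏ j, (Complex.normSq (c (α j)) : ℂ) else 0)
    (hS : ∀ α β, S α β =
      (∏ j, (Complex.normSq (c (α j)) : ℂ)) *
        ((Finset.univ.filter fun σ : Equiv.Perm (Fin k) => β = α ∘ σ).card : ℂ)) :
    traceNorm (R - S) ≤
      (k.factorial : ℝ) * Real.exp (Real.pi * Real.sqrt (2 * k / 3)) *
        ∑ j, (Complex.normSq (c j)) ^ 2 :=
  random_phase_moment_product_form_general D k c hc R S hR hS
end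

section
/- For every integer k ≥ 2 there exists a constant C_k > 0 with the following property. Let D ≥ 1, let E : Fin D → ℝ satisfy the k-th no-resonance condition, let c : Fin D → ℂ with ∑_j |c_j|² = 1, and let a : Fin D → ℂ. Define p(t) = |∑_j a_j c_j exp(−i E_j t)|² and p_avg = ∑_j |a_j|² |c_j|², and assume p_avg > 0. Then the infinite-time average lim_{T→∞} (1/T) ∫₀^T p(t)^k dt exists and satisfies | lim_{T→∞} (1/T) ∫₀^T p(t)^k dt − k! · p_avg^k | ≤ C_k · p_avg^{k−2} · ∑_j |a_j|⁴ |c_j|⁴. -/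
/-!
Write `q j = |a j|² |c j|²` and `f t = ∑ j, a j c j e^{-i E j t}`. Expanding `p^k = f^k (conj f)^k`
gives a finite sum of exponentials indexed by pairs of `k`-tuples `(α, β)`, with frequency
`∑ E (α i) - ∑ E (β i)`; the time average keeps exactly the resonant pairs. Under `k`-th
no-resonance the resonant `β` are the rearrangements of `α`, each contributing `∏ q (α i)`, so the
limit is `∑_α N α ∏ q (α i)` with `N α ≤ k!` the number of rearrangements, and `N α = k!` for
injective `α`. Since `k! (∑ q)^k = k! ∑_α ∏ q (α i)`, only non-injective tuples contribute to the
error; each has a coincidence `α i = α j`, and for each of the `k (k - 1)` ordered pairs `(i, j)`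
the tuples with `α i = α j` contribute `(∑ q²) (∑ q)^(k-2)`.
-/

open Filter MeasureTheory

open Topology Complex ComplexConjugate Finset

lemma norm_integral_cexp_neg_I_mul_le {ω : ℝ} (hω : ω ≠ 0) (T : ℝ) :
    ‖∫ t in (0:ℝ)..T, cexp (-(I * ω * t))‖ ≤ 2 / |ω| := by
  have hc : -(I * ω) ≠ 0 := by simpa using hω
  have hexp : ∀ t : ℝ, -(I * ω * t) = -(I * ω) * t := fun t => by ring
  have hnorm : ∀ t : ℝ, ‖cexp (-(I * ω) * t)‖ = 1 := fun t => by
    rw [norm_exp]; simp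
  simp_rw [hexp]
  rw [integral_exp_mul_complex hc, norm_div, show ‖-(I * ω)‖ = |ω| by simp]
  gcongr
  calc _ ≤ ‖cexp (-(I * ω) * T)‖ + ‖cexp (-(I * ω) * (0:ℝ))‖ := norm_sub_le _ _
    _ = 2 := by rw [hnorm, hnorm]; norm_num

lemma tendsto_average_cexp_neg_I_mul (ω : ℝ) :
    Tendsto (fun T : ℝ => (T : ℂ)⁻¹ * ∫ t in (0:ℝ)..T, cexp (-(I * ω * t))) atTop
      (𝓝 (if ω = 0 then 1 else 0)) := by
  split_ifs with hω
  · subst hω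
    refine tendsto_const_nhds.congr' ?_
    filter_upwards [eventually_ne_atTop 0] with T hT
    simp [hT]
  · have hinv : Tendsto (fun T : ℝ => (T : ℂ)⁻¹) atTop (𝓝 0) := by
      simpa [Function.comp_def] using
        (continuous_ofReal.tendsto 0).comp (tendsto_inv_atTop_zero (𝕜 := ℝ))
    exact hinv.zero_mul_isBoundedUnder_le
      ⟨2 / |ω|, eventually_map.2 (Eventually.of_forall (norm_integral_cexp_neg_I_mul_le hω))⟩

lemma tendsto_average_sum_mul_cexp {ι : Type*} [Fintype ι] (c : ι → ℂ) (ω : ι → ℝ) :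
    Tendsto (fun T : ℝ => (T : ℂ)⁻¹ * ∫ t in (0:ℝ)..T, ∑ s, c s * cexp (-(I * ω s * t)))
      atTop (𝓝 (∑ s, if ω s = 0 then c s else 0)) := by
  have hcont : ∀ s, Continuous fun t : ℝ => c s * cexp (-(I * ω s * t)) := fun s => by fun_prop
  have hsum : ∀ T : ℝ, (T : ℂ)⁻¹ * ∫ t in (0:ℝ)..T, ∑ s, c s * cexp (-(I * ω s * t)) =
      ∑ s, c s * ((T : ℂ)⁻¹ * ∫ t in (0:ℝ)..T, cexp (-(I * ω s * t))) := fun T => by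
    rw [intervalIntegral.integral_finsetSum fun s _ => (hcont s).intervalIntegrable _ _,
      mul_sum]
    simp_rw [intervalIntegral.integral_const_mul]
    ring_nf
  simp_rw [hsum]
  refine tendsto_finsetSum _ fun s _ => ?_
  simpa [mul_ite] using (tendsto_average_cexp_neg_I_mul (ω s)).const_mul (c s)

section Moments

variable {ι : Type*} [Fintype ι]

lemma sum_mul_cexp_pow (v : ι → ℂ) (w : ι → ℝ) (t : ℝ) (k : ℕ) :
    (∑ j, v j * cexp (-(I * w j * t))) ^ k =
      ∑ α : Fin k → ι, (∏ i, v (α i)) * cexp (-(I * (∑ i, w (α i) : ℝ) * t)) := by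
  rw [Fintype.sum_pow]
  refine sum_congr rfl fun α _ => ?_
  rw [prod_mul_distrib, ← exp_sum]
  push_cast
  rw [mul_sum, sum_mul, sum_neg_distrib]

lemma conj_sum_mul_cexp (v : ι → ℂ) (w : ι → ℝ) (t : ℝ) :
    conj (∑ j, v j * cexp (-(I * w j * t))) = ∑ j, conj (v j) * cexp (-(I * (-w j : ℝ) * t)) := by
  rw [map_sum]
  refine sum_congr rfl fun j _ => ?_
  rw [map_mul, ← exp_conj]
  simp

lemma normSq_sum_mul_cexp_pow (v : ι → ℂ) (w : ι → ℝ) (t : ℝ) (k : ℕ) :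
    ((normSq (∑ j, v j * cexp (-(I * w j * t))) ^ k : ℝ) : ℂ) =
      ∑ αβ : (Fin k → ι) × (Fin k → ι), (∏ i, v (αβ.1 i)) * (∏ i, conj (v (αβ.2 i))) *
        cexp (-(I * ((∑ i, w (αβ.1 i)) - ∑ i, w (αβ.2 i) : ℝ) * t)) := by
  rw [ofReal_pow, ← mul_conj, mul_pow, conj_sum_mul_cexp, sum_mul_cexp_pow, sum_mul_cexp_pow,
    sum_mul_sum, ← Finset.univ_product_univ, sum_product]
  refine sum_congr rfl fun α _ => sum_congr rfl fun β _ => ?_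
  rw [mul_mul_mul_comm, ← exp_add]
  push_cast
  rw [sum_neg_distrib]
  ring_nf

theorem tendsto_average_normSq_pow (v : ι → ℂ) (w : ι → ℝ) (k : ℕ) :
    Tendsto (fun T : ℝ => (1 / T) *
        ∫ t in (0:ℝ)..T, normSq (∑ j, v j * cexp (-(I * w j * t))) ^ k) atTop
      (𝓝 (∑ αβ : (Fin k → ι) × (Fin k → ι), if ∑ i, w (αβ.1 i) = ∑ i, w (αβ.2 i) then
        (∏ i, v (αβ.1 i)) * ∏ i, conj (v (αβ.2 i)) else 0).re) := by
  have h := tendsto_average_sum_mul_cexp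
    (fun αβ : (Fin k → ι) × (Fin k → ι) => (∏ i, v (αβ.1 i)) * ∏ i, conj (v (αβ.2 i)))
    (fun αβ => (∑ i, w (αβ.1 i)) - ∑ i, w (αβ.2 i))
  simp_rw [sub_eq_zero, ← normSq_sum_mul_cexp_pow, intervalIntegral.integral_ofReal] at h
  refine ((continuous_re.tendsto _).comp h).congr fun T => ?_
  simp [← ofReal_inv, ← ofReal_mul, one_div]

end Moments

section Permutations

variable {ι κ : Type*} [Fintype ι] [DecidableEq ι] [DecidableEq κ]

def rearrangements (α : ι → κ) : Finset (ι → κ) :=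
  univ.image fun σ : Equiv.Perm ι => α ∘ σ

lemma card_rearrangements_le (α : ι → κ) :
    #(rearrangements α) ≤ (Fintype.card ι).factorial :=
  card_image_le.trans (by rw [card_univ, Fintype.card_perm])

lemma card_rearrangements_of_injective {α : ι → κ} (hα : α.Injective) :
    #(rearrangements α) = (Fintype.card ι).factorial := by
  have hinj : Function.Injective fun σ : Equiv.Perm ι => α ∘ σ :=
    fun σ τ h => Equiv.ext fun i => hα (congrFun h i)
  rw [rearrangements, card_image_of_injective _ hinj, card_univ, Fintype.card_perm]

end Permutations

section Combinatorics

variable {ι κ R : Type*} [Fintype ι] [DecidableEq ι] [Fintype κ] [DecidableEq κ]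

lemma sum_ite_apply_eq_apply_prod [CommSemiring R] (q : κ → R) {i j : ι} (hij : i ≠ j) :
    ∑ α : ι → κ, (if α i = α j then ∏ m, q (α m) else 0) =
      (∑ x, q x ^ 2) * (∑ x, q x) ^ (Fintype.card ι - 2) := by
  -- The constraint `α i = α j = x` is written as a product over coordinates, so that
  -- `Fintype.prod_sum` factorises the sum over `α`.
  let f : κ → ι → κ → R := fun x m y => if m = i ∨ m = j then (if y = x then q x else 0) else q y
  have hprod : ∀ (α : ι → κ) (x : κ),
      ∏ m, f x m (α m) = if α i = x ∧ α j = x then ∏ m, q (α m) else 0 := by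
    intro α x
    split_ifs with hx
    · refine prod_congr rfl fun m _ => ?_
      rcases eq_or_ne m i with rfl | hmi
      · simp [f, hx.1]
      rcases eq_or_ne m j with rfl | hmj
      · simp [f, hx.2]
      simp [f, hmi, hmj]
    · rw [not_and_or] at hx
      rcases hx with hx | hx
      · exact prod_eq_zero (mem_univ i) (by simp [f, hx])
      · exact prod_eq_zero (mem_univ j) (by simp [f, hx])
  have hpair : (univ.filter fun m => m = i ∨ m = j) = {i, j} := by ext; simp
  have hslice : ∀ x, ∏ m, ∑ y, f x m y = q x ^ 2 * (∑ y, q y) ^ (Fintype.card ι - 2) := by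
    intro x
    have : ∀ m, ∑ y, f x m y = if m = i ∨ m = j then q x else ∑ y, q y := fun m => by
      split_ifs <;> simp [f, *]
    simp_rw [this]
    rw [prod_ite, prod_const, prod_const, hpair, card_pair hij, filter_not, hpair,
      card_univ_sdiff, card_pair hij]
  calc ∑ α : ι → κ, (if α i = α j then ∏ m, q (α m) else 0)
      = ∑ α : ι → κ, ∑ x, ∏ m, f x m (α m) := by
        simp_rw [hprod, ite_and, sum_ite_eq, mem_univ, if_true, eq_comm]
    _ = ∑ x, ∏ m, ∑ y, f x m y := by rw [sum_comm]; simp_rw [Fintype.prod_sum]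
    _ = _ := by simp_rw [hslice]; rw [sum_mul]

lemma sum_prod_of_not_injective_le (q : κ → ℝ) (hq : ∀ x, 0 ≤ q x) :
    ∑ α : ι → κ, (if α.Injective then 0 else ∏ m, q (α m)) ≤
      (Fintype.card ι * (Fintype.card ι - 1) : ℕ) *
        ((∑ x, q x ^ 2) * (∑ x, q x) ^ (Fintype.card ι - 2)) := by
  have hpoint : ∀ α : ι → κ, (if α.Injective then 0 else ∏ m, q (α m)) ≤
      ∑ p ∈ (univ : Finset ι).offDiag, if α p.1 = α p.2 then ∏ m, q (α m) else 0 := by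
    intro α
    have hnonneg : ∀ p ∈ (univ : Finset ι).offDiag,
        0 ≤ if α p.1 = α p.2 then ∏ m, q (α m) else 0 := fun p _ => by
      split_ifs
      exacts [prod_nonneg fun m _ => hq _, le_rfl]
    split_ifs with hα
    · exact sum_nonneg hnonneg
    · obtain ⟨i, j, hαij, hij⟩ := Function.not_injective_iff.mp hα
      simpa [hαij] using
        single_le_sum hnonneg (a := (i, j)) (mem_offDiag.mpr ⟨mem_univ i, mem_univ j, hij⟩)
  calc _ ≤ ∑ α : ι → κ, ∑ p ∈ (univ : Finset ι).offDiag,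
          (if α p.1 = α p.2 then ∏ m, q (α m) else 0) := sum_le_sum fun α _ => hpoint α
    _ = ∑ p ∈ (univ : Finset ι).offDiag,
          (∑ x, q x ^ 2) * (∑ x, q x) ^ (Fintype.card ι - 2) := by
      rw [sum_comm]
      exact sum_congr rfl fun p hp => sum_ite_apply_eq_apply_prod q (mem_offDiag.mp hp).2.2
    _ = _ := by rw [sum_const, nsmul_eq_mul, offDiag_card, card_univ, Nat.mul_sub_one]

lemma abs_sum_card_rearrangements_mul_prod_sub_le (q : κ → ℝ) (hq : ∀ x, 0 ≤ q x) :
    |∑ α : ι → κ, (#(rearrangements α) : ℝ) * ∏ m, q (α m) -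
        (Fintype.card ι).factorial * (∑ x, q x) ^ Fintype.card ι| ≤
      (Fintype.card ι).factorial * (Fintype.card ι * (Fintype.card ι - 1) : ℕ) *
        ((∑ x, q x ^ 2) * (∑ x, q x) ^ (Fintype.card ι - 2)) := by
  have hpoint : ∀ α : ι → κ,
      |((#(rearrangements α) : ℝ) - (Fintype.card ι).factorial) *
          ∏ m, q (α m)| ≤
        (Fintype.card ι).factorial * (if α.Injective then 0 else ∏ m, q (α m)) := by
    intro α
    rw [abs_mul, abs_of_nonneg (prod_nonneg fun m _ => hq _)]
    split_ifs with hα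
    · simp [card_rearrangements_of_injective hα]
    · have hle : (#(rearrangements α) : ℝ) ≤ (Fintype.card ι).factorial :=
        mod_cast card_rearrangements_le α
      refine mul_le_mul_of_nonneg_right ?_ (prod_nonneg fun m _ => hq _)
      rw [abs_of_nonpos (by linarith)]
      linarith [(#(rearrangements α)).cast_nonneg (α := ℝ)]
  have hpow : (∑ x, q x) ^ Fintype.card ι = ∑ α : ι → κ, ∏ m, q (α m) := by
    rw [← Fintype.prod_sum, prod_const, card_univ]
  rw [hpow, mul_sum, ← sum_sub_distrib, mul_assoc]
  calc _ ≤ ∑ α : ι → κ, |((#(rearrangements α) : ℝ) -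
          (Fintype.card ι).factorial) * ∏ m, q (α m)| := by
        simp_rw [sub_mul]; exact abs_sum_le_sum_abs _ _
    _ ≤ ∑ α : ι → κ, (Fintype.card ι).factorial * (if α.Injective then 0 else ∏ m, q (α m)) :=
        sum_le_sum fun α _ => hpoint α
    _ ≤ _ := by
        rw [← mul_sum]
        exact mul_le_mul_of_nonneg_left (sum_prod_of_not_injective_le q hq) (Nat.cast_nonneg _)

end Combinatorics

theorem NoResonance.filter_eq_rearrangements {D k : ℕ} {E : Fin D → ℝ} (hE : NoResonance D k E)
    (α : Fin k → Fin D) :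
    univ.filter (fun β : Fin k → Fin D => ∑ i, E (α i) = ∑ i, E (β i)) =
      rearrangements α := by
  ext β
  simp only [rearrangements, mem_filter, mem_univ, true_and, mem_image]
  constructor
  · intro hαβ
    obtain ⟨σ, rfl⟩ := hE α β hαβ
    exact ⟨σ, rfl⟩
  · rintro ⟨σ, rfl⟩
    exact (Equiv.sum_comp σ fun i => E (α i)).symm

theorem NoResonance.sum_resonant_eq {D k : ℕ} {E : Fin D → ℝ} (hE : NoResonance D k E)
    (v : Fin D → ℂ) :
    (∑ αβ : (Fin k → Fin D) × (Fin k → Fin D), if ∑ i, E (αβ.1 i) = ∑ i, E (αβ.2 i) then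
        (∏ i, v (αβ.1 i)) * ∏ i, conj (v (αβ.2 i)) else 0) =
      ((∑ α : Fin k → Fin D, (#(rearrangements α) : ℝ) *
        ∏ i, normSq (v (α i)) : ℝ) : ℂ) := by
  rw [Fintype.sum_prod_type, ofReal_sum]
  refine sum_congr rfl fun α _ => ?_
  have hcoef : ∀ β ∈ rearrangements α,
      (∏ i, v (α i)) * ∏ i, conj (v (β i)) = ((∏ i, normSq (v (α i)) : ℝ) : ℂ) := by
    simp only [rearrangements, mem_image, mem_univ, true_and]
    rintro _ ⟨σ, rfl⟩
    rw [Function.comp_def, Equiv.prod_comp σ fun i => conj (v (α i)), ← prod_mul_distrib,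
      ofReal_prod]
    simp_rw [mul_conj]
  rw [← sum_filter, hE.filter_eq_rearrangements, sum_congr rfl hcoef, sum_const, nsmul_eq_mul]
  push_cast
  rfl

/-- Porter–Thomas statistics of the outcome probabilities over time: for every `k ≥ 2`
there is a constant `C_k > 0` such that the infinite-time average of `p(t)^k` exists and
is within `C_k p_avg^{k-2} ∑ⱼ |aⱼ|⁴|cⱼ|⁴` of `k! p_avg^k`. -/
theorem outcome_probability_porter_thomas_moments (k : ℕ) (hk : 2 ≤ k) :
    ∃ C : ℝ, 0 < C ∧
      ∀ (D : ℕ), 1 ≤ D → ∀ (E : Fin D → ℝ), NoResonance D k E →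
      ∀ (c a : Fin D → ℂ), (∑ j, Complex.normSq (c j)) = 1 →
      0 < (∑ j, Complex.normSq (a j) * Complex.normSq (c j)) →
      ∃ L : ℝ,
        Tendsto
          (fun T : ℝ => (1 / T) *
            ∫ t in (0:ℝ)..T,
              (Complex.normSq
                (∑ j, a j * c j * Complex.exp (-(Complex.I * (E j : ℂ) * (t : ℂ))))) ^ k)
          atTop (nhds L) ∧
        |L - (k.factorial : ℝ) * (∑ j, Complex.normSq (a j) * Complex.normSq (c j)) ^ k| ≤
          C * (∑ j, Complex.normSq (a j) * Complex.normSq (c j)) ^ (k - 2) *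
            ∑ j, (Complex.normSq (a j)) ^ 2 * (Complex.normSq (c j)) ^ 2 := by
  have hpairs : 0 < k * (k - 1) := Nat.mul_pos (by omega) (by omega)
  refine ⟨k.factorial * (k * (k - 1) : ℕ), by positivity, ?_⟩
  intro D _ E hE c a _ _
  have hlim := tendsto_average_normSq_pow (fun j => a j * c j) E k
  rw [hE.sum_resonant_eq (fun j => a j * c j), ofReal_re] at hlim
  refine ⟨_, hlim, ?_⟩
  have h := abs_sum_card_rearrangements_mul_prod_sub_le (ι := Fin k)
    (fun j => normSq (a j * c j)) fun j => normSq_nonneg _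
  simp only [Fintype.card_fin, normSq_mul, mul_pow] at h ⊢
  exact h.trans_eq (by ring)
end

section
/- Let D ≥ 1 and let E : Fin D → ℝ satisfy the 2nd no-resonance condition. Let U_t be the D×D diagonal complex matrix with diagonal entries exp(−i·E_j·t). Then for every complex matrix A indexed by (Fin D × Fin D) × (Fin D × Fin D) (an operator on ℂ^D ⊗ ℂ^D), the limit lim_{T→∞} (1/T) ∫₀^T (U_t ⊗ U_t) A (U_t ⊗ U_t)^† dt exists and equals ∑_{i,k} e_{ik} e_{ik}^† A e_{ik} e_{ik}^† + ∑_{i,k} e_{ik} e_{ik}^† A e_{ki} e_{ki}^† − ∑_i e_{ii} e_{ii}^† A e_{ii} e_{ii}^†, where e_{ik} denotes the standard basis vector of ℂ^D ⊗ ℂ^D labeled by the pair (i,k). -/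
/-!
Conjugating by the diagonal unitary `Uₜ ⊗ Uₜ` multiplies the entry `A_{(i,k),(j,l)}` by the phase
`exp (-i (E_i + E_k - E_j - E_l) t)`, whose time average is `1` if the frequency vanishes and `0`
otherwise. By the second no-resonance condition the frequency vanishes exactly when
`(j,l) = (i,k)` or `(j,l) = (k,i)`, and the right-hand side is the matrix that keeps precisely
these entries of `A`: the subtracted diagonal sum corrects the double count when `i = k`.
-/

open Filter MeasureTheory Matrix
open scoped Kronecker

open Complex
open scoped Topology

theorem NoResonance.add_eq_add_iff {D : ℕ} {E : Fin D → ℝ} (hE : NoResonance D 2 E)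
    (p q : Fin D × Fin D) :
    E p.1 + E p.2 = E q.1 + E q.2 ↔ p = q ∨ p.swap = q := by
  refine ⟨fun h => ?_, ?_⟩
  · obtain ⟨σ, hσ⟩ := hE ![p.1, p.2] ![q.1, q.2] (by simpa [Fin.sum_univ_two] using h)
    have h0 := congrFun hσ 0
    have h1 := congrFun hσ 1
    have hperm : ∀ τ : Equiv.Perm (Fin 2), τ = 1 ∨ τ = Equiv.swap 0 1 := by decide
    rcases hperm σ with rfl | rfl
    · left; simp_all [Prod.ext_iff]
    · right; simp_all [Prod.ext_iff]
  · rintro (rfl | rfl)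
    · rfl
    · exact add_comm _ _

section SingleSums

variable {m n α : Type*} [Fintype m] [DecidableEq m] [Fintype n] [DecidableEq n]

theorem sum_single_mul_mul_single_apply [Semiring α] (σ : n → n) (A : Matrix n n α) (p q : n) :
    (∑ x, single x x (1 : α) * A * single (σ x) (σ x) 1 : Matrix n n α) p q =
      if σ p = q then A p q else 0 := by
  simp only [single_mul_mul_single, one_mul, mul_one, Matrix.sum_apply, single_apply]
  rw [Fintype.sum_eq_single p fun x hx => if_neg fun h => hx h.1]
  split_ifs <;> simp_all

theorem sum_single_diag_mul_mul_single_diag_apply [Semiring α] (A : Matrix (m × m) (m × m) α)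
    (p q : m × m) :
    (∑ i, single (i, i) (i, i) (1 : α) * A * single (i, i) (i, i) 1 :
      Matrix (m × m) (m × m) α) p q =
      if p = q ∧ p.swap = q then A p q else 0 := by
  simp only [single_mul_mul_single, one_mul, mul_one, Matrix.sum_apply, single_apply]
  rw [Fintype.sum_eq_single p.1 fun i hi => if_neg fun h => hi (congrArg Prod.fst h.1)]
  obtain ⟨a, b⟩ := p
  obtain ⟨c, d⟩ := q
  split_ifs <;> simp only [Prod.mk.injEq, Prod.swap_prod_mk] at * <;> grind

theorem sum_single_add_sum_single_swap_sub_sum_single_diag_apply [Ring α]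
    (A : Matrix (m × m) (m × m) α) (p q : m × m) :
    ((∑ i, ∑ k, single (i, k) (i, k) (1 : α) * A * single (i, k) (i, k) 1)
        + (∑ i, ∑ k, single (i, k) (i, k) (1 : α) * A * single (k, i) (k, i) 1)
        - (∑ i, single (i, i) (i, i) (1 : α) * A * single (i, i) (i, i) 1) :
        Matrix (m × m) (m × m) α) p q =
      if p = q ∨ p.swap = q then A p q else 0 := by
  have hid := sum_single_mul_mul_single_apply id A p q
  have hswap := sum_single_mul_mul_single_apply Prod.swap A p q
  simp only [Fintype.sum_prod_type, id, Prod.swap_prod_mk] at hid hswap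
  rw [Matrix.sub_apply, Matrix.add_apply, hid, hswap, sum_single_diag_mul_mul_single_diag_apply]
  by_cases h1 : p = q <;> by_cases h2 : p.swap = q <;> simp [h1, h2]

end SingleSums

theorem diagonal_mul_mul_conjTranspose_diagonal_apply {n α : Type*} [Fintype n] [DecidableEq n]
    [Semiring α] [StarRing α] (d : n → α) (A : Matrix n n α) (p q : n) :
    (diagonal d * A * (diagonal d)ᴴ) p q = d p * A p q * star (d q) := by
  rw [diagonal_conjTranspose, mul_diagonal, diagonal_mul]
  rfl

theorem exp_mul_exp_mul_star_exp_mul_exp (a b c d t : ℝ) :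
    exp (-(I * a * t)) * exp (-(I * b * t)) * star (exp (-(I * c * t)) * exp (-(I * d * t))) =
      exp (-(I * ↑(a + b - (c + d)) * t)) := by
  rw [star_def, map_mul, ← exp_conj, ← exp_conj, ← exp_add, ← exp_add, ← exp_add]
  congr 1
  simp only [map_neg, map_mul, conj_I, conj_ofReal]
  push_cast
  ring

theorem norm_integral_exp_le {ω : ℝ} (hω : ω ≠ 0) (T : ℝ) :
    ‖∫ t in (0 : ℝ)..T, exp (-(I * ω * t))‖ ≤ 2 / |ω| := by
  have hc : -(I * ω) ≠ 0 := by simpa using hω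
  have hexp : ∀ t : ℝ, -(I * ω * t) = -(I * ω) * t := fun t => by ring
  simp_rw [hexp]
  rw [integral_exp_mul_complex hc, norm_div, norm_neg, norm_mul, norm_I, one_mul, norm_real,
    Real.norm_eq_abs]
  gcongr
  calc ‖exp (-(I * ω) * T) - exp (-(I * ω) * 0)‖ ≤ ‖exp (-(I * ω) * T)‖ + ‖exp (-(I * ω) * 0)‖ :=
        norm_sub_le _ _
    _ = 2 := by simp [norm_exp]; norm_num

theorem tendsto_average_integral_exp (ω : ℝ) :
    Tendsto (fun T : ℝ => (1 / T : ℂ) * ∫ t in (0 : ℝ)..T, exp (-(I * ω * t))) atTop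
      (𝓝 (if ω = 0 then 1 else 0)) := by
  split_ifs with hω
  · subst hω
    refine tendsto_const_nhds.congr' ?_
    filter_upwards [eventually_ne_atTop 0] with T hT
    simp [hT]
  · refine Tendsto.zero_mul_isBoundedUnder_le ?_
      ⟨2 / |ω|, eventually_map.2 (.of_forall (norm_integral_exp_le hω))⟩
    simpa using tendsto_inv_atTop_zero.ofReal

theorem second_hamiltonian_twirling_identity_general
    (D : ℕ) (E : Fin D → ℝ) (hNR : NoResonance D 2 E)
    (U : ℝ → Matrix (Fin D) (Fin D) ℂ)
    (hU : ∀ t, U t = Matrix.diagonal fun j => Complex.exp (-(Complex.I * (E j : ℂ) * (t : ℂ))))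
    (A : Matrix (Fin D × Fin D) (Fin D × Fin D) ℂ) :
    ∀ p q : Fin D × Fin D,
      Tendsto
        (fun T : ℝ => (1 / T : ℂ) *
          ∫ t in (0:ℝ)..T, ((U t ⊗ₖ U t) * A * (U t ⊗ₖ U t)ᴴ) p q)
        atTop
        (nhds
          ((((∑ i : Fin D, ∑ k : Fin D, Matrix.single (i, k) (i, k) (1 : ℂ) * A *
                Matrix.single (i, k) (i, k) (1 : ℂ))
            + (∑ i : Fin D, ∑ k : Fin D, Matrix.single (i, k) (i, k) (1 : ℂ) * A *
                Matrix.single (k, i) (k, i) (1 : ℂ))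
            - (∑ i : Fin D, Matrix.single (i, i) (i, i) (1 : ℂ) * A *
                Matrix.single (i, i) (i, i) (1 : ℂ)) :
              Matrix (Fin D × Fin D) (Fin D × Fin D) ℂ)) p q)) := by
  intro p q
  have hentry : ∀ t : ℝ, ((U t ⊗ₖ U t) * A * (U t ⊗ₖ U t)ᴴ) p q =
      A p q * exp (-(I * ↑(E p.1 + E p.2 - (E q.1 + E q.2)) * t)) := fun t => by
    rw [hU, diagonal_kronecker_diagonal, diagonal_mul_mul_conjTranspose_diagonal_apply,
      mul_right_comm, exp_mul_exp_mul_star_exp_mul_exp, mul_comm]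
  have hresonant : E p.1 + E p.2 - (E q.1 + E q.2) = 0 ↔ p = q ∨ p.swap = q :=
    sub_eq_zero.trans (hNR.add_eq_add_iff p q)
  simp_rw [hentry, intervalIntegral.integral_const_mul, mul_left_comm _ (A p q)]
  simp only [sum_single_add_sum_single_swap_sub_sum_single_diag_apply, ← hresonant]
  convert (tendsto_average_integral_exp _).const_mul (A p q) using 2
  split_ifs <;> simp

/-- Second Hamiltonian twirling identity: under the 2nd no-resonance condition, the
infinite-time average of `(Uₜ ⊗ Uₜ) A (Uₜ ⊗ Uₜ)ᴴ` exists entrywise and equals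
`∑_{i,k} e_{ik}e_{ik}ᴴ A e_{ik}e_{ik}ᴴ + ∑_{i,k} e_{ik}e_{ik}ᴴ A e_{ki}e_{ki}ᴴ
  − ∑_i e_{ii}e_{ii}ᴴ A e_{ii}e_{ii}ᴴ`. -/
theorem second_hamiltonian_twirling_identity
    (D : ℕ) (hD : 1 ≤ D) (E : Fin D → ℝ) (hNR : NoResonance D 2 E)
    (U : ℝ → Matrix (Fin D) (Fin D) ℂ)
    (hU : ∀ t, U t = Matrix.diagonal fun j => Complex.exp (-(Complex.I * (E j : ℂ) * (t : ℂ))))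
    (A : Matrix (Fin D × Fin D) (Fin D × Fin D) ℂ) :
    ∀ p q : Fin D × Fin D,
      Tendsto
        (fun T : ℝ => (1 / T : ℂ) *
          ∫ t in (0:ℝ)..T, ((U t ⊗ₖ U t) * A * (U t ⊗ₖ U t)ᴴ) p q)
        atTop
        (nhds
          ((((∑ i : Fin D, ∑ k : Fin D, Matrix.single (i, k) (i, k) (1 : ℂ) * A *
                Matrix.single (i, k) (i, k) (1 : ℂ))
            + (∑ i : Fin D, ∑ k : Fin D, Matrix.single (i, k) (i, k) (1 : ℂ) * A *
                Matrix.single (k, i) (k, i) (1 : ℂ))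
            - (∑ i : Fin D, Matrix.single (i, i) (i, i) (1 : ℂ) * A *
                Matrix.single (i, i) (i, i) (1 : ℂ)) :
              Matrix (Fin D × Fin D) (Fin D × Fin D) ℂ)) p q)) :=
  second_hamiltonian_twirling_identity_general D E hNR U hU A
end

section
/- Let D ≥ 1 and λ : Fin D → ℝ with λ_j > 0 for all j. Let μ be the probability measure on ℂ^D under which the coordinates z_j are independent, with real and imaginary parts of z_j independent centered real Gaussians of variance λ_j/2 (so that the expectation of |z_j|² is λ_j and of z_j² is 0). Then for every k ≥ 1 and all tuples m, m' : Fin k → Fin D, ∫ ∏_{j=1}^k z_{m_j} · conj(z_{m'_j}) dμ(z) = ∑_{σ ∈ S_k} ∏_{j=1}^k (λ_{m_j} if m'_{σ(j)} = m_j, else 0). Equivalently, the k-th moment ∫ (z z^†)^{⊗k} dμ(z) equals ρ^{⊗k} ∑_{σ ∈ S_k} Perm(σ), where ρ = diag(λ) and Perm(σ) is the permutation operator on (ℂ^D)^{⊗k}. -/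
open MeasureTheory

/-- The circular complex Gaussian measure on `ℂ` with `E|z|² = v`: real and imaginary
parts are independent centered real Gaussians of variance `v/2`. -/
noncomputable def complexGaussian (v : ℝ) : Measure ℂ :=
  ((ProbabilityTheory.gaussianReal 0 (Real.toNNReal (v / 2))).prod
    (ProbabilityTheory.gaussianReal 0 (Real.toNNReal (v / 2)))).map
    (fun p : ℝ × ℝ => (p.1 : ℂ) + (p.2 : ℂ) * Complex.I)

instance (v : ℝ) : IsProbabilityMeasure (complexGaussian v) := by
  unfold complexGaussian
  exact Measure.isProbabilityMeasure_map (Measurable.aemeasurable (by fun_prop))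

/-!
Grouping equal coordinates gives `∏ⱼ z_{mⱼ} conj(z_{m'ⱼ}) = ∏ᵢ zᵢ^{aᵢ} conj(zᵢ)^{bᵢ}`, where `aᵢ`
and `bᵢ` are the sizes of the fibres of `m` and `m'` over `i`, so by independence the integral is a
product of one-dimensional moments. In polar coordinates `z = r e^{iθ}` the angular integral of
`e^{i(a-b)θ}` vanishes unless `a = b`, and the radial one is a Gamma integral, giving
`E[z^a conj(z)^b] = [a = b] a! v^a`. On the other side, the permutations `σ` with `m' ∘ σ = m` are
exactly the families of bijections between the fibres of `m` and of `m'`, so there are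
`∏ᵢ [aᵢ = bᵢ] aᵢ!` of them.
-/

open ProbabilityTheory Real ComplexConjugate

section Combinatorics

open Finset

variable {ι κ : Type*} [Fintype ι]

lemma Fintype.prod_comp_eq_prod_pow_card {M : Type*} [CommMonoid M] [Fintype κ] [DecidableEq κ]
    (m : ι → κ) (f : κ → M) : ∏ j, f (m j) = ∏ i, f i ^ #{j | m j = i} := by
  simp_rw [← Finset.prod_fiberwise' univ m f, prod_const]

lemma Fintype.card_equiv_eq_ite (α β : Type*) [Fintype α] [Fintype β] [DecidableEq α]
    [DecidableEq β] :
    Fintype.card (α ≃ β) =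
      if Fintype.card α = Fintype.card β then (Fintype.card α).factorial else 0 := by
  split_ifs with h
  · exact Fintype.card_equiv (Fintype.equivOfCardEq h)
  · exact Fintype.card_eq_zero_iff.mpr ⟨fun e => h (Fintype.card_congr e)⟩

def permCompEqEquivPiFiberEquiv (m m' : ι → κ) :
    {σ : Equiv.Perm ι // ∀ j, m' (σ j) = m j} ≃ ∀ i, ({j // m j = i} ≃ {j // m' j = i}) where
  toFun σ i := σ.1.subtypeEquiv fun j => by rw [σ.2 j]
  invFun e := ⟨Equiv.ofFiberEquiv e, Equiv.ofFiberEquiv_map e⟩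
  left_inv σ := by
    ext j
    simp [Equiv.ofFiberEquiv, Equiv.sigmaFiberEquiv]
  right_inv e := by
    funext i
    ext ⟨j, rfl⟩
    simp [Equiv.ofFiberEquiv, Equiv.sigmaFiberEquiv]

variable [DecidableEq ι] [Fintype κ] [DecidableEq κ]

lemma card_perm_comp_eq (m m' : ι → κ) :
    #{σ : Equiv.Perm ι | ∀ j, m' (σ j) = m j} =
      ∏ i, if #{j | m j = i} = #{j | m' j = i} then (#{j | m j = i}).factorial else 0 := by
  rw [← Fintype.card_subtype, Fintype.card_congr (permCompEqEquivPiFiberEquiv m m'),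
    Fintype.card_pi]
  simp only [Fintype.card_equiv_eq_ite, Fintype.card_subtype]

lemma sum_perm_prod_ite_eq_prod_factorial {R : Type*} [CommSemiring R] (m m' : ι → κ)
    (f : κ → R) :
    ∑ σ : Equiv.Perm ι, ∏ j, (if m' (σ j) = m j then f (m j) else 0) =
      ∏ i, if #{j | m j = i} = #{j | m' j = i}
        then ((#{j | m j = i}).factorial : R) * f i ^ #{j | m j = i} else 0 := by
  calc ∑ σ : Equiv.Perm ι, ∏ j, (if m' (σ j) = m j then f (m j) else 0)
      = ∑ σ : Equiv.Perm ι, if ∀ j, m' (σ j) = m j then ∏ j, f (m j) else 0 := by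
        simp only [Fintype.prod_ite_zero]
    _ = #{σ : Equiv.Perm ι | ∀ j, m' (σ j) = m j} * ∏ i, f i ^ #{j | m j = i} := by
        rw [← sum_filter, sum_const, nsmul_eq_mul, Fintype.prod_comp_eq_prod_pow_card]
    _ = _ := by
        rw [card_perm_comp_eq, Nat.cast_prod, ← prod_mul_distrib]
        refine prod_congr rfl fun i _ => ?_
        split_ifs <;> simp

end Combinatorics

section ComplexGaussian

open Complex Set

lemma gaussianPDFReal_re_mul_gaussianPDFReal_im {v : ℝ} (hv : 0 < v) (z : ℂ) :
    gaussianPDFReal 0 (v / 2).toNNReal z.re * gaussianPDFReal 0 (v / 2).toNNReal z.im =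
      (π * v)⁻¹ * rexp (-‖z‖ ^ 2 / v) := by
  simp only [gaussianPDFReal, Real.coe_toNNReal _ (half_pos hv).le, sub_zero]
  rw [mul_mul_mul_comm, ← mul_inv, ← Real.sqrt_mul (by positivity), ← Real.exp_add,
    Complex.sq_norm, Complex.normSq_apply]
  congr 1
  · rw [show 2 * π * (v / 2) = π * v by ring, Real.sqrt_mul_self (by positivity)]
  · congr 1
    field_simp
    ring

lemma integral_complexGaussian {v : ℝ} (hv : 0 < v) (F : ℂ → ℂ) :
    ∫ z, F z ∂complexGaussian v = ∫ z, ((π * v)⁻¹ * rexp (-‖z‖ ^ 2 / v)) • F z := by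
  have hvar : (v / 2).toNNReal ≠ 0 := by simpa using half_pos hv
  have hequiv : (fun p : ℝ × ℝ => (p.1 : ℂ) + p.2 * I) = measurableEquivRealProd.symm := by
    ext p; simp [measurableEquivRealProd, equivRealProdCLM_symm_apply]
  rw [complexGaussian, hequiv, measurableEquivRealProd.symm.measurableEmbedding.integral_map,
    gaussianReal_of_var_ne_zero 0 hvar,
    prod_withDensity (measurable_gaussianPDF 0 _) (measurable_gaussianPDF 0 _),
    integral_withDensity_eq_integral_toReal_smul (by fun_prop)
      (.of_forall fun _ => ENNReal.mul_lt_top gaussianPDF_lt_top gaussianPDF_lt_top),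
    ← Measure.volume_eq_prod,
    ← volume_preserving_equiv_real_prod.symm.integral_comp
      measurableEquivRealProd.symm.measurableEmbedding]
  refine integral_congr_ae (.of_forall fun p => ?_)
  simp only [gaussianPDF, ENNReal.toReal_mul, ENNReal.toReal_ofReal (gaussianPDFReal_nonneg _ _ _),
    ← gaussianPDFReal_re_mul_gaussianPDFReal_im hv]
  rfl

lemma integral_exp_int_mul_mul_I (n : ℤ) :
    ∫ θ in Ioo (-π) π, cexp (n * θ * I) = if n = 0 then ((2 * π : ℝ) : ℂ) else 0 := by
  rw [← integral_Ioc_eq_integral_Ioo, ← intervalIntegral.integral_of_le (by linarith [pi_pos])]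
  split_ifs with hn
  · simp [hn, two_mul]
  · have hn' : (n : ℝ) ≠ 0 := by exact_mod_cast hn
    have hsubst := intervalIntegral.integral_comp_mul_left (a := -π) (b := π)
      (fun t : ℝ => cexp (t * I)) hn'
    simp only [ofReal_mul, ofReal_intCast, mul_neg] at hsubst
    rw [hsubst, integral_exp_mul_I_eq_sin, Real.sin_int_mul_pi]
    simp

lemma integral_pow_mul_exp_neg_sq_div {v : ℝ} (hv : 0 < v) (a : ℕ) :
    ∫ r in Ioi (0 : ℝ), r ^ (2 * a + 1) * rexp (-r ^ 2 / v) = a.factorial * v ^ (a + 1) / 2 := by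
  have hGamma := _root_.integral_rpow_mul_exp_neg_mul_rpow (p := 2) (q := (2 * a + 1 : ℕ))
    two_pos (by linarith [Nat.cast_nonneg (α := ℝ) (2 * a + 1)]) (inv_pos.mpr hv)
  have hexp : ((-((2 * a + 1 : ℕ) + 1) / 2 : ℝ)) = -((a + 1 : ℕ) : ℝ) := by push_cast; ring
  have hexp' : (((2 * a + 1 : ℕ) + 1) / 2 : ℝ) = (a : ℝ) + 1 := by push_cast; ring
  rw [hexp, hexp', Real.Gamma_nat_eq_factorial, rpow_neg (inv_pos.mpr hv).le, rpow_natCast,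
    inv_pow, inv_inv] at hGamma
  calc ∫ r in Ioi (0 : ℝ), r ^ (2 * a + 1) * rexp (-r ^ 2 / v)
      = ∫ r in Ioi (0 : ℝ), r ^ ((2 * a + 1 : ℕ) : ℝ) * rexp (-v⁻¹ * r ^ (2 : ℝ)) := by
        refine setIntegral_congr_fun measurableSet_Ioi fun r _ => ?_
        rw [rpow_natCast, rpow_two, neg_mul, inv_mul_eq_div, neg_div]
    _ = a.factorial * v ^ (a + 1) / 2 := by
        rw [hGamma]
        ring

lemma Complex.polarCoord_symm_pow_mul_conj_pow (p : ℝ × ℝ) (a b : ℕ) :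
    Complex.polarCoord.symm p ^ a * conj (Complex.polarCoord.symm p) ^ b =
      ((p.1 ^ (a + b) : ℝ) : ℂ) * cexp (((a - b : ℤ) : ℂ) * p.2 * I) := by
  have hpolar : Complex.polarCoord.symm p = p.1 * cexp (p.2 * I) := by
    simp [exp_mul_I]
  rw [hpolar, map_mul, conj_ofReal, ← exp_conj, map_mul, conj_ofReal, conj_I, mul_pow, mul_pow,
    ← Complex.exp_nat_mul, ← Complex.exp_nat_mul, mul_mul_mul_comm, ← pow_add, ← Complex.exp_add]
  push_cast
  ring_nf

lemma integral_complexGaussian_pow_mul_conj_pow {v : ℝ} (hv : 0 < v) (a b : ℕ) :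
    ∫ z, z ^ a * conj z ^ b ∂complexGaussian v =
      if a = b then (a.factorial : ℂ) * v ^ a else 0 := by
  calc ∫ z, z ^ a * conj z ^ b ∂complexGaussian v
      = ∫ p in Ioi 0 ×ˢ Ioo (-π) π,
          (((π * v)⁻¹ * (p.1 ^ (a + b + 1) * rexp (-p.1 ^ 2 / v)) : ℝ) : ℂ)
            * cexp (((a - b : ℤ) : ℂ) * p.2 * I) := by
        rw [integral_complexGaussian hv, ← Complex.integral_comp_polarCoord_symm,
          polarCoord_target]
        congr 1 with p
        rw [Complex.polarCoord_symm_pow_mul_conj_pow, Complex.norm_polarCoord_symm, sq_abs]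
        simp only [real_smul]
        push_cast
        ring
    _ = (∫ r in Ioi 0, (((π * v)⁻¹ * (r ^ (a + b + 1) * rexp (-r ^ 2 / v)) : ℝ) : ℂ))
          * ∫ θ in Ioo (-π) π, cexp (((a - b : ℤ) : ℂ) * θ * I) := by
        rw [Measure.volume_eq_prod]
        exact setIntegral_prod_mul
          (fun r : ℝ => (((π * v)⁻¹ * (r ^ (a + b + 1) * rexp (-r ^ 2 / v)) : ℝ) : ℂ))
          (fun θ : ℝ => cexp (((a - b : ℤ) : ℂ) * θ * I)) _ _
    _ = if a = b then (a.factorial : ℂ) * v ^ a else 0 := by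
        rw [integral_complex_ofReal, integral_const_mul, integral_exp_int_mul_mul_I]
        by_cases hab : a = b
        · subst hab
          rw [sub_self, if_pos rfl, if_pos rfl, ← two_mul, integral_pow_mul_exp_neg_sq_div hv]
          have hv' : (v : ℂ) ≠ 0 := ofReal_ne_zero.mpr hv.ne'
          push_cast
          field_simp
          ring
        · rw [if_neg (sub_ne_zero.mpr (mod_cast hab)), if_neg hab, mul_zero]

end ComplexGaussian

open Finset

theorem unnormalized_scrooge_kth_moment_general
    (D : ℕ) (lam : Fin D → ℝ) (hlam : ∀ j, 0 < lam j)
    (k : ℕ) (m m' : Fin k → Fin D) :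
    (∫ z : Fin D → ℂ, ∏ j, z (m j) * (starRingEnd ℂ) (z (m' j))
        ∂(Measure.pi fun j => complexGaussian (lam j))) =
      ∑ σ : Equiv.Perm (Fin k),
        ∏ j, (if m' (σ j) = m j then (lam (m j) : ℂ) else 0) := by
  have hgroup (z : Fin D → ℂ) : ∏ j, z (m j) * conj (z (m' j)) =
      ∏ i, z i ^ #{j | m j = i} * conj (z i) ^ #{j | m' j = i} := by
    rw [prod_mul_distrib, Fintype.prod_comp_eq_prod_pow_card m,
      Fintype.prod_comp_eq_prod_pow_card m' fun i => conj (z i), ← prod_mul_distrib]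
  simp_rw [hgroup]
  rw [integral_fintype_prod_eq_prod (f := fun i w => w ^ #{j | m j = i} * conj w ^ #{j | m' j = i})]
  simp_rw [integral_complexGaussian_pow_mul_conj_pow (hlam _)]
  exact (sum_perm_prod_ite_eq_prod_factorial m m' fun i => (lam i : ℂ)).symm

/-- `k`-th moments of the unnormalized Scrooge (Gaussian) ensemble with first moment
`ρ = diag(λ)`: for independent circular complex Gaussian coordinates with `E|zⱼ|² = λⱼ`,
`∫ ∏ⱼ z_{mⱼ} conj(z_{m'ⱼ}) dμ = ∑_{σ ∈ S_k} ∏ⱼ λ_{mⱼ} [m'_{σ(j)} = mⱼ]`. -/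
theorem unnormalized_scrooge_kth_moment
    (D : ℕ) (hD : 1 ≤ D) (lam : Fin D → ℝ) (hlam : ∀ j, 0 < lam j)
    (k : ℕ) (hk : 1 ≤ k) (m m' : Fin k → Fin D) :
    (∫ z : Fin D → ℂ, ∏ j, z (m j) * (starRingEnd ℂ) (z (m' j))
        ∂(Measure.pi fun j => complexGaussian (lam j))) =
      ∑ σ : Equiv.Perm (Fin k),
        ∏ j, (if m' (σ j) = m j then (lam (m j) : ℂ) else 0) :=
  unnormalized_scrooge_kth_moment_general D lam hlam k m m'
end

section
/- Let D ≥ 2, let μ_1, …, μ_D be pairwise distinct positive real numbers, and let m be a natural number with m ≤ D − 2. Then ∫₀^∞ z^m · ∏_{j=1}^D (μ_j + z)^{−1} dz = −∑_{j=1}^D (−μ_j)^m · ln(μ_j) · ∏_{i ≠ j} (μ_i − μ_j)^{−1}. -/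
open MeasureTheory Polynomial Finset Filter Real
open scoped Topology

private theorem scrooge_pf_poly (D : ℕ) (hD : 2 ≤ D) (mu : Fin D → ℝ)
    (hdist : Function.Injective mu) (m : ℕ) (hm : m ≤ D - 2) :
    (X : ℝ[X]) ^ m = ∑ j, C ((-mu j) ^ m * ∏ i ∈ univ.erase j, (mu i - mu j)⁻¹) *
      ∏ i ∈ univ.erase j, (X + C (mu i)) := by
  have hv : Set.InjOn (fun j => -mu j) (univ : Finset (Fin D)) := by
    intro a _ b _ h
    exact hdist (by simpa using neg_injective h)
  have hdeg : ((X : ℝ[X]) ^ m).degree < (univ : Finset (Fin D)).card := by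
    rw [degree_X_pow, card_univ, Fintype.card_fin]
    exact_mod_cast lt_of_le_of_lt hm (by omega)
  have h := Lagrange.eq_interpolate_of_eval_eq (s := univ) (v := fun j => -mu j)
    (r := fun j => (-mu j) ^ m) hv hdeg (fun i _ => by simp)
  rw [h, Lagrange.interpolate_apply]
  refine Finset.sum_congr rfl fun j _ => ?_
  have hbasis : Lagrange.basis univ (fun j => -mu j) j =
      C (∏ i ∈ univ.erase j, (mu i - mu j)⁻¹) * ∏ i ∈ univ.erase j, (X + C (mu i)) := by
    rw [Lagrange.basis, map_prod, ← prod_mul_distrib]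
    refine Finset.prod_congr rfl fun i hi => ?_
    rw [Lagrange.basisDivisor]
    have h1 : -mu j - -mu i = mu i - mu j := by ring
    rw [h1, map_neg, sub_neg_eq_add]
  rw [hbasis, ← mul_assoc, ← C_mul]

private theorem scrooge_sum_c_zero (D : ℕ) (hD : 2 ≤ D) (mu : Fin D → ℝ)
    (hdist : Function.Injective mu) (m : ℕ) (hm : m ≤ D - 2) :
    ∑ j, (-mu j) ^ m * ∏ i ∈ univ.erase j, (mu i - mu j)⁻¹ = 0 := by
  have hpf := scrooge_pf_poly D hD mu hdist m hm
  have hcoeff := congrArg (fun p => Polynomial.coeff p (D - 1)) hpf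
  simp only [coeff_X_pow, finset_sum_coeff, coeff_C_mul] at hcoeff
  have hmon : ∀ j : Fin D, (∏ i ∈ univ.erase j, ((X : ℝ[X]) + C (mu i))).coeff (D-1) = 1 := by
    intro j
    have hmonic : (∏ i ∈ univ.erase j, ((X : ℝ[X]) + C (mu i))).Monic :=
      monic_prod_of_monic _ _ fun i _ => monic_X_add_C _
    have hnd : (∏ i ∈ univ.erase j, ((X : ℝ[X]) + C (mu i))).natDegree = D - 1 := by
      rw [natDegree_prod _ _ (fun i _ => (monic_X_add_C (mu i)).ne_zero)]
      simp [natDegree_X_add_C, card_erase_of_mem]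
    rw [← hnd]
    exact hmonic.coeff_natDegree
  simp only [hmon, mul_one] at hcoeff
  rw [← hcoeff, if_neg (by omega)]

private theorem scrooge_pf_pointwise (D : ℕ) (hD : 2 ≤ D) (mu : Fin D → ℝ) (hpos : ∀ j, 0 < mu j)
    (hdist : Function.Injective mu) (m : ℕ) (hm : m ≤ D - 2)
    (z : ℝ) (hz : 0 ≤ z) :
    z ^ m * ∏ j, (mu j + z)⁻¹ =
      ∑ j, ((-mu j) ^ m * ∏ i ∈ univ.erase j, (mu i - mu j)⁻¹) * (mu j + z)⁻¹ := by
  have hpf := scrooge_pf_poly D hD mu hdist m hm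
  have hne : ∀ j, mu j + z ≠ 0 := fun j => (add_pos_of_pos_of_nonneg (hpos j) hz).ne'
  have heval := congrArg (fun p => Polynomial.eval z p) hpf
  simp only [eval_pow, eval_X, eval_finset_sum, eval_mul, eval_C, eval_prod, eval_add] at heval
  rw [heval, Finset.sum_mul]
  refine Finset.sum_congr rfl fun j _ => ?_
  rw [mul_assoc]
  congr 1
  have h2 : ∏ i ∈ univ.erase j, (mu i + z)⁻¹ = (∏ i ∈ univ.erase j, (z + mu i))⁻¹ := by
    rw [← Finset.prod_inv_distrib]
    exact Finset.prod_congr rfl fun i _ => by rw [add_comm]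
  have h3 : (∏ i ∈ univ.erase j, (z + mu i)) ≠ 0 :=
    Finset.prod_ne_zero_iff.2 fun i _ => by rw [add_comm]; exact hne i
  rw [← Finset.mul_prod_erase _ _ (Finset.mem_univ j), h2,
    mul_comm ((mu j + z)⁻¹), ← mul_assoc, mul_inv_cancel₀ h3, one_mul]

/-- Closed form of the Scrooge-ensemble generating integral:
`∫₀^∞ zᵐ ∏ⱼ (μⱼ + z)⁻¹ dz = −∑ⱼ (−μⱼ)ᵐ ln(μⱼ) ∏_{i≠j} (μᵢ − μⱼ)⁻¹`
for pairwise distinct positive `μⱼ` and `m ≤ D − 2`. -/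
theorem scrooge_generating_integral
    (D : ℕ) (hD : 2 ≤ D) (mu : Fin D → ℝ) (hpos : ∀ j, 0 < mu j)
    (hdist : Function.Injective mu) (m : ℕ) (hm : m ≤ D - 2) :
    (∫ z in Set.Ioi (0:ℝ), z ^ m * ∏ j, (mu j + z)⁻¹) =
      -∑ j, (-mu j) ^ m * Real.log (mu j) *
        ∏ i ∈ Finset.univ.erase j, (mu i - mu j)⁻¹ := by
  set c : Fin D → ℝ := fun j => (-mu j) ^ m * ∏ i ∈ univ.erase j, (mu i - mu j)⁻¹ with hc
  set f : ℝ → ℝ := fun z => z ^ m * ∏ j, (mu j + z)⁻¹ with hf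
  -- a lower bound on the mu's
  haveI : Nonempty (Fin D) := ⟨⟨0, by omega⟩⟩
  have hne : (univ : Finset (Fin D)).Nonempty := univ_nonempty
  set a : ℝ := min 1 ((univ : Finset (Fin D)).inf' hne mu) with ha
  have ha0 : 0 < a := lt_min one_pos (by
    rcases Finset.exists_mem_eq_inf' hne mu with ⟨j, _, hj⟩
    rw [hj]; exact hpos j)
  have ha1 : a ≤ 1 := min_le_left _ _
  have haj : ∀ j, a ≤ mu j := fun j =>
    le_trans (min_le_right _ _) (Finset.inf'_le mu (mem_univ j))
  -- continuity on Ioi 0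
  have hcont : ContinuousOn f (Set.Ioi (0:ℝ)) := by
    apply ContinuousOn.mul ((continuous_pow m).continuousOn)
    apply continuousOn_finset_prod
    intro j _
    exact ((continuous_const.add continuous_id).continuousOn).inv₀
      fun z hz => (add_pos (hpos j) hz).ne'
  -- pointwise bound
  have hbound : ∀ z ∈ Set.Ioi (0:ℝ), ‖f z‖ ≤ (a ^ D)⁻¹ * (1 + z ^ 2)⁻¹ := by
    intro z hz
    have hz0 : (0:ℝ) < z := hz
    have hf0 : 0 ≤ f z := by
      apply mul_nonneg (pow_nonneg hz0.le m)
      exact Finset.prod_nonneg fun j _ => inv_nonneg.2 (add_pos (hpos j) hz0).le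
    rw [Real.norm_eq_abs, abs_of_nonneg hf0]
    have hprod : a ^ D * (z ^ m * (1 + z ^ 2)) ≤ ∏ j, (mu j + z) := by
      have h1 : ∀ j : Fin D, a * (1 + z) ≤ mu j + z := by
        intro j
        have : a * (1 + z) = a + a * z := by ring
        rw [this]
        exact add_le_add (haj j) (by nlinarith)
      have h2 : (a * (1 + z)) ^ D ≤ ∏ j, (mu j + z) := by
        calc (a * (1 + z)) ^ D = ∏ _j : Fin D, a * (1 + z) := by
              rw [Finset.prod_const, card_univ, Fintype.card_fin]
          _ ≤ ∏ j, (mu j + z) := Finset.prod_le_prod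
              (fun j _ => by positivity) (fun j _ => h1 j)
      have h3 : z ^ m * (1 + z ^ 2) ≤ (1 + z) ^ D := by
        have hm2 : m + 2 ≤ D := by omega
        calc z ^ m * (1 + z ^ 2) ≤ (1 + z) ^ m * (1 + z) ^ 2 := by
              apply mul_le_mul (pow_le_pow_left₀ hz0.le (by linarith) m)
                (by nlinarith) (by positivity) (by positivity)
          _ = (1 + z) ^ (m + 2) := by rw [pow_add]
          _ ≤ (1 + z) ^ D := pow_le_pow_right₀ (by linarith) hm2
      calc a ^ D * (z ^ m * (1 + z ^ 2)) ≤ a ^ D * (1 + z) ^ D :=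
            mul_le_mul_of_nonneg_left h3 (by positivity)
        _ = (a * (1 + z)) ^ D := (mul_pow _ _ _).symm
        _ ≤ ∏ j, (mu j + z) := h2
    have hppos : (0:ℝ) < a ^ D * (z ^ m * (1 + z ^ 2)) := by positivity
    have hfz : f z = z ^ m * (∏ j, (mu j + z))⁻¹ := by
      rw [hf]; simp [Finset.prod_inv_distrib]
    rw [hfz]
    calc z ^ m * (∏ j, (mu j + z))⁻¹
        ≤ z ^ m * (a ^ D * (z ^ m * (1 + z ^ 2)))⁻¹ := by
          apply mul_le_mul_of_nonneg_left _ (pow_nonneg hz0.le m)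
          exact inv_anti₀ hppos hprod
      _ = (a ^ D)⁻¹ * (1 + z ^ 2)⁻¹ := by
          field_simp
  -- integrability on Ioi 0
  have hint : IntegrableOn f (Set.Ioi (0:ℝ)) := by
    apply Integrable.mono' ((integrable_inv_one_add_sq.const_mul ((a ^ D)⁻¹)).restrict)
    · exact hcont.aestronglyMeasurable measurableSet_Ioi
    · exact (ae_restrict_iff' measurableSet_Ioi).2 (Filter.Eventually.of_forall hbound)
  -- the interval integral up to R
  have key2 : ∀ R : ℝ, 0 < R → (∫ z in (0:ℝ)..R, f z) =
      ∑ j, c j * (Real.log (mu j + R) - Real.log (mu j)) := by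
    intro R hR
    have heq : Set.EqOn f (fun z => ∑ j, c j * (mu j + z)⁻¹) (Set.uIcc 0 R) := by
      intro z hz
      rw [Set.uIcc_of_le hR.le] at hz
      exact scrooge_pf_pointwise D hD mu hpos hdist m hm z hz.1
    rw [intervalIntegral.integral_congr heq]
    rw [intervalIntegral.integral_finset_sum]
    · refine Finset.sum_congr rfl fun j _ => ?_
      rw [intervalIntegral.integral_const_mul]
      congr 1
      have h1 : (∫ z in (0:ℝ)..R, (mu j + z)⁻¹) = ∫ z in (0:ℝ)..R, (fun x => x⁻¹) (z + mu j) := by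
        apply intervalIntegral.integral_congr
        intro z _
        simp [add_comm]
      rw [h1, intervalIntegral.integral_comp_add_right (fun x => x⁻¹) (mu j), zero_add,
        integral_inv_of_pos (hpos j) (by linarith [hpos j]),
        Real.log_div (by linarith [hpos j]) (hpos j).ne', add_comm R (mu j)]
    · intro j _
      apply ContinuousOn.intervalIntegrable
      apply ContinuousOn.mul continuousOn_const
      apply ContinuousOn.inv₀ ((continuous_const.add continuous_id).continuousOn)
      intro z hz
      rw [Set.uIcc_of_le hR.le] at hz
      exact (add_pos_of_pos_of_nonneg (hpos j) hz.1).ne'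
  -- sum of coefficients is zero
  have hsum0 : ∑ j, c j = 0 := scrooge_sum_c_zero D hD mu hdist m hm
  -- the limit of the sum
  have hlim : Tendsto (fun R => ∑ j, c j * (Real.log (mu j + R) - Real.log (mu j)))
      atTop (𝓝 (-∑ j, c j * Real.log (mu j))) := by
    have h0 : Tendsto (fun R => ∑ j, c j * Real.log (mu j / R + 1)) atTop (𝓝 0) := by
      have : Tendsto (fun R => ∑ j, c j * Real.log (mu j / R + 1)) atTop
          (𝓝 (∑ j : Fin D, c j * Real.log 1)) := by
        apply tendsto_finset_sum
        intro j _
        apply Tendsto.const_mul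
        have h1 : Tendsto (fun R : ℝ => mu j / R + 1) atTop (𝓝 (0 + 1)) :=
          (Tendsto.div_atTop tendsto_const_nhds tendsto_id).add tendsto_const_nhds
        rw [zero_add] at h1
        exact ((Real.continuousAt_log one_ne_zero).tendsto).comp h1
      simpa using this
    have heq : ∀ᶠ R in atTop, (∑ j, c j * Real.log (mu j / R + 1)) - ∑ j, c j * Real.log (mu j) =
        ∑ j, c j * (Real.log (mu j + R) - Real.log (mu j)) := by
      filter_upwards [eventually_gt_atTop (0:ℝ)] with R hR
      have hlog : ∀ j, Real.log (mu j + R) = Real.log (mu j / R + 1) + Real.log R := by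
        intro j
        have h1 : mu j + R = (mu j / R + 1) * R := by field_simp
        have h2 : (0:ℝ) < mu j / R + 1 := add_pos (div_pos (hpos j) hR) one_pos
        rw [h1, Real.log_mul h2.ne' hR.ne']
      rw [eq_comm]
      calc ∑ j, c j * (Real.log (mu j + R) - Real.log (mu j))
          = ∑ j, (c j * Real.log (mu j / R + 1) + c j * Real.log R - c j * Real.log (mu j)) :=
            Finset.sum_congr rfl fun j _ => by rw [hlog j]; ring
        _ = (∑ j, c j * Real.log (mu j / R + 1)) + (∑ j, c j) * Real.log R -
              ∑ j, c j * Real.log (mu j) := by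
            rw [Finset.sum_sub_distrib, Finset.sum_add_distrib, Finset.sum_mul]
        _ = (∑ j, c j * Real.log (mu j / R + 1)) - ∑ j, c j * Real.log (mu j) := by
            rw [hsum0, zero_mul, add_zero]
    have := (h0.sub (tendsto_const_nhds (x := ∑ j, c j * Real.log (mu j)))).congr' heq
    rwa [zero_sub] at this
  -- the interval integrals converge to the improper integral
  have hconv : Tendsto (fun R => ∫ z in (0:ℝ)..R, f z) atTop
      (𝓝 (∫ z in Set.Ioi (0:ℝ), f z)) :=
    intervalIntegral_tendsto_integral_Ioi 0 hint tendsto_id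
  have hconv2 : Tendsto (fun R => ∫ z in (0:ℝ)..R, f z) atTop
      (𝓝 (-∑ j, c j * Real.log (mu j))) := by
    apply hlim.congr'
    filter_upwards [eventually_gt_atTop (0:ℝ)] with R hR
    exact (key2 R hR).symm
  have hfinal := tendsto_nhds_unique hconv hconv2
  rw [hf] at hfinal
  rw [hfinal]
  congr 1
  exact Finset.sum_congr rfl fun j _ => by rw [hc]; ring
end

section
/- Let λ be a real number with 0 < λ < 1 and λ ≠ 1/2. Then (1/(λ(1−λ))) · ∫₀^∞ ∫₀^∞ (x² / (x + y)) · exp(−x/λ − y/(1−λ)) dx dy = λ² · ( 2λ(4λ − 5) − 2(1−λ)² · ln((1−λ)/λ) + 3 ) / (2λ − 1)³. -/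
/-!
Schwinger parametrisation `1 / (x + y) = ∫₀^∞ exp (-(x + y) t) dt` turns the double integral,
with `A = 1 / λ` and `B = 1 / (1 - λ)`, into
`∫₀^∞ (∫₀^∞ x² e^{-(A+t)x} dx) (∫₀^∞ e^{-(B+t)y} dy) dt = ∫₀^∞ 2 / ((t + A)³ (t + B)) dt`,
an elementary integral by partial fractions as long as `A ≠ B`, i.e. `λ ≠ 1/2`.
The exchange of integrals is done with lower Lebesgue integrals, where Tonelli needs no
integrability; finiteness of the final integral transfers the result back.
-/

open MeasureTheory Set Filter Topology Real
open scoped ENNReal Nat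

theorem integral_integral_eq_toReal_lintegral_lintegral {α β : Type*} [MeasurableSpace α]
    [MeasurableSpace β] {μ : Measure α} {ν : Measure β} [SFinite ν] {f : α → β → ℝ}
    (hf : Measurable (Function.uncurry f)) (hf0 : ∀ᵐ x ∂μ, ∀ᵐ y ∂ν, 0 ≤ f x y)
    (hfin : ∫⁻ x, ∫⁻ y, ENNReal.ofReal (f x y) ∂ν ∂μ ≠ ∞) :
    ∫ x, ∫ y, f x y ∂ν ∂μ = (∫⁻ x, ∫⁻ y, ENNReal.ofReal (f x y) ∂ν ∂μ).toReal := by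
  have hmeas : Measurable fun x => ∫⁻ y, ENNReal.ofReal (f x y) ∂ν :=
    (ENNReal.measurable_ofReal.comp hf).lintegral_prod_right'
  rw [← integral_toReal hmeas.aemeasurable (ae_lt_top hmeas hfin)]
  refine integral_congr_ae ?_
  filter_upwards [hf0] with x hx
  exact integral_eq_lintegral_of_nonneg_ae hx hf.of_uncurry_left.aestronglyMeasurable

theorem integral_Ioi_pow_mul_exp_neg_mul (n : ℕ) {c : ℝ} (hc : 0 < c) :
    ∫ x in Ioi (0 : ℝ), x ^ n * exp (-(c * x)) = n ! / c ^ (n + 1) := by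
  have h := integral_rpow_mul_exp_neg_mul_Ioi (a := n + 1) (by positivity) hc
  rw [add_sub_cancel_right, Gamma_nat_eq_factorial, ← Nat.cast_succ] at h
  simp only [rpow_natCast] at h
  rw [h, one_div, inv_pow, Nat.succ_eq_add_one]
  field_simp

theorem lintegral_Ioi_ofReal_pow_mul_exp_neg_mul (n : ℕ) {c : ℝ} (hc : 0 < c) :
    ∫⁻ x in Ioi (0 : ℝ), ENNReal.ofReal (x ^ n * exp (-(c * x))) =
      ENNReal.ofReal (n ! / c ^ (n + 1)) := by
  have hint : IntegrableOn (fun x : ℝ => x ^ n * exp (-(c * x))) (Ioi 0) :=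
    Integrable.of_integral_ne_zero (by rw [integral_Ioi_pow_mul_exp_neg_mul n hc]; positivity)
  rw [← integral_Ioi_pow_mul_exp_neg_mul n hc, ofReal_integral_eq_lintegral_ofReal hint]
  filter_upwards [self_mem_ae_restrict measurableSet_Ioi] with x hx
  exact mul_nonneg (pow_nonneg hx.out.le n) (exp_pos _).le

theorem ofReal_inv_eq_lintegral_Ioi_exp_neg_mul {s : ℝ} (hs : 0 < s) :
    ENNReal.ofReal s⁻¹ = ∫⁻ t in Ioi (0 : ℝ), ENNReal.ofReal (exp (-(s * t))) := by
  simpa using (lintegral_Ioi_ofReal_pow_mul_exp_neg_mul 0 hs).symm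

section SchwingerParametrisation

variable {A B : ℝ}

theorem ofReal_sq_div_add_mul_exp_eq_lintegral {x y : ℝ} (hx : 0 < x) (hy : 0 < y) :
    ENNReal.ofReal (x ^ 2 / (x + y) * exp (-(A * x) - B * y)) =
      ∫⁻ t in Ioi (0 : ℝ),
        ENNReal.ofReal (x ^ 2 * exp (-((A + t) * x)) * exp (-((B + t) * y))) := by
  have hc : 0 ≤ x ^ 2 * exp (-(A * x) - B * y) := by positivity
  rw [div_mul_eq_mul_div, div_eq_mul_inv, ENNReal.ofReal_mul hc,
    ofReal_inv_eq_lintegral_Ioi_exp_neg_mul (by positivity : 0 < x + y),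
    ← lintegral_const_mul' _ _ ENNReal.ofReal_ne_top]
  refine lintegral_congr fun t => ?_
  rw [← ENNReal.ofReal_mul hc, mul_assoc, mul_assoc, ← exp_add, ← exp_add]
  ring_nf

theorem lintegral_Ioi_Ioi_sq_mul_exp_neg_mul (hA : 0 < A) (hB : 0 < B) {t : ℝ} (ht : 0 < t) :
    ∫⁻ x in Ioi (0 : ℝ), ∫⁻ y in Ioi (0 : ℝ),
        ENNReal.ofReal (x ^ 2 * exp (-((A + t) * x)) * exp (-((B + t) * y))) =
      ENNReal.ofReal (2 / ((t + A) ^ 3 * (t + B))) := by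
  have hAt : 0 < A + t := by linarith
  have hBt : 0 < B + t := by linarith
  calc _ = ∫⁻ x in Ioi (0 : ℝ), ENNReal.ofReal (x ^ 2 * exp (-((A + t) * x))) *
        ENNReal.ofReal (B + t)⁻¹ := by
        refine lintegral_congr fun x => ?_
        simp_rw [ENNReal.ofReal_mul (by positivity : 0 ≤ x ^ 2 * exp (-((A + t) * x)))]
        rw [lintegral_const_mul' _ _ ENNReal.ofReal_ne_top,
          ofReal_inv_eq_lintegral_Ioi_exp_neg_mul hBt]
    _ = ENNReal.ofReal (2 / ((t + A) ^ 3 * (t + B))) := by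
        rw [lintegral_mul_const' _ _ ENNReal.ofReal_ne_top,
          lintegral_Ioi_ofReal_pow_mul_exp_neg_mul 2 hAt, ← ENNReal.ofReal_mul (by positivity)]
        congr 1
        field_simp
        ring

theorem lintegral_Ioi_Ioi_sq_div_add_mul_exp (hA : 0 < A) (hB : 0 < B) :
    ∫⁻ x in Ioi (0 : ℝ), ∫⁻ y in Ioi (0 : ℝ),
        ENNReal.ofReal (x ^ 2 / (x + y) * exp (-(A * x) - B * y)) =
      ∫⁻ t in Ioi (0 : ℝ), ENNReal.ofReal (2 / ((t + A) ^ 3 * (t + B))) :=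
  calc _ = ∫⁻ x in Ioi (0 : ℝ), ∫⁻ y in Ioi (0 : ℝ), ∫⁻ t in Ioi (0 : ℝ),
        ENNReal.ofReal (x ^ 2 * exp (-((A + t) * x)) * exp (-((B + t) * y))) :=
        setLIntegral_congr_fun measurableSet_Ioi fun x hx =>
          setLIntegral_congr_fun measurableSet_Ioi fun y hy =>
            ofReal_sq_div_add_mul_exp_eq_lintegral hx hy
    _ = ∫⁻ x in Ioi (0 : ℝ), ∫⁻ t in Ioi (0 : ℝ), ∫⁻ y in Ioi (0 : ℝ),
        ENNReal.ofReal (x ^ 2 * exp (-((A + t) * x)) * exp (-((B + t) * y))) :=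
        lintegral_congr fun x => lintegral_lintegral_swap (by fun_prop)
    _ = ∫⁻ t in Ioi (0 : ℝ), ∫⁻ x in Ioi (0 : ℝ), ∫⁻ y in Ioi (0 : ℝ),
        ENNReal.ofReal (x ^ 2 * exp (-((A + t) * x)) * exp (-((B + t) * y))) := by
        have hmeas : Measurable fun p : (ℝ × ℝ) × ℝ => ENNReal.ofReal
            (p.1.1 ^ 2 * exp (-((A + p.1.2) * p.1.1)) * exp (-((B + p.1.2) * p.2))) := by
          fun_prop
        exact lintegral_lintegral_swap hmeas.lintegral_prod_right'.aemeasurable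
    _ = _ := setLIntegral_congr_fun measurableSet_Ioi fun t ht =>
        lintegral_Ioi_Ioi_sq_mul_exp_neg_mul hA hB ht

end SchwingerParametrisation

section RationalIntegral

variable {A B : ℝ}

theorem integrableOn_Ioi_two_div_add_pow_three_mul_add (hA : 0 < A) (hB : 0 < B) :
    IntegrableOn (fun t : ℝ => 2 / ((t + A) ^ 3 * (t + B))) (Ioi 0) := by
  have hdom : IntegrableOn (fun t : ℝ => 2 / B * (t + A) ^ (-3 : ℝ)) (Ioi 0) :=
    (integrableOn_add_rpow_Ioi_of_lt (by norm_num) (by linarith)).const_mul _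
  refine hdom.mono' (Measurable.aestronglyMeasurable (by fun_prop)) ?_
  filter_upwards [self_mem_ae_restrict measurableSet_Ioi] with t (ht : 0 < t)
  have htA : 0 < t + A := by linarith
  have htB : 0 < t + B := by linarith
  rw [Real.norm_of_nonneg (by positivity), rpow_neg htA.le, rpow_ofNat, ← div_eq_mul_inv, div_div,
    mul_comm B]
  gcongr
  linarith

-- Partial fractions in `u = t + A`, with `D = B - A`:
-- `2 / (u³ (u + D)) = 2 / (D u³) - 2 / (D² u²) + 2 / (D³ u) - 2 / (D³ (u + D))`.
noncomputable def twoDivCubeMulPrimitive (A B : ℝ) (t : ℝ) : ℝ :=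
  -(1 / (B - A)) * ((t + A) ^ 2)⁻¹ + 2 / (B - A) ^ 2 * (t + A)⁻¹ +
    2 / (B - A) ^ 3 * (log (t + A) - log (t + B))

theorem hasDerivAt_twoDivCubeMulPrimitive (hA : 0 < A) (hB : 0 < B) (hAB : A ≠ B) {t : ℝ}
    (ht : 0 ≤ t) :
    HasDerivAt (twoDivCubeMulPrimitive A B) (2 / ((t + A) ^ 3 * (t + B))) t := by
  have htA : 0 < t + A := by linarith
  have htB : 0 < t + B := by linarith
  have hBA : B - A ≠ 0 := sub_ne_zero.2 hAB.symm
  have hlin (c : ℝ) : HasDerivAt (fun t : ℝ => t + c) 1 t := (hasDerivAt_id t).add_const c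
  have hsq := ((hlin A).fun_pow 2).fun_inv (by positivity)
  have hinv := (hlin A).fun_inv htA.ne'
  have hlog := ((hlin A).log htA.ne').fun_sub ((hlin B).log htB.ne')
  refine (((hsq.const_mul (-(1 / (B - A)))).fun_add (hinv.const_mul (2 / (B - A) ^ 2))).fun_add
    (hlog.const_mul (2 / (B - A) ^ 3))).congr_deriv ?_
  field_simp
  ring

theorem tendsto_twoDivCubeMulPrimitive_atTop (A B : ℝ) :
    Tendsto (twoDivCubeMulPrimitive A B) atTop (𝓝 0) := by
  have hlin : Tendsto (fun t : ℝ => t + A) atTop atTop :=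
    tendsto_atTop_add_const_right _ A tendsto_id
  have hsq : Tendsto (fun t : ℝ => ((t + A) ^ 2)⁻¹) atTop (𝓝 0) :=
    ((tendsto_pow_atTop two_ne_zero).comp hlin).inv_tendsto_atTop
  have hlog : Tendsto (fun t : ℝ => log (t + A) - log (t + B)) atTop (𝓝 0) := by
    simpa using (tendsto_log_comp_add_sub_log A).sub (tendsto_log_comp_add_sub_log B)
  have h := ((hsq.const_mul (-(1 / (B - A)))).add
    (hlin.inv_tendsto_atTop.const_mul (2 / (B - A) ^ 2))).add (hlog.const_mul (2 / (B - A) ^ 3))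
  simp only [mul_zero, add_zero] at h
  exact h

theorem integral_Ioi_two_div_add_pow_three_mul_add (hA : 0 < A) (hB : 0 < B) (hAB : A ≠ B) :
    ∫ t in Ioi (0 : ℝ), 2 / ((t + A) ^ 3 * (t + B)) =
      1 / ((B - A) * A ^ 2) - 2 / ((B - A) ^ 2 * A) - 2 / (B - A) ^ 3 * (log A - log B) := by
  rw [integral_Ioi_of_hasDerivAt_of_nonneg'
    (fun t ht => hasDerivAt_twoDivCubeMulPrimitive hA hB hAB ht.out)
    (fun t ht => by have := ht.out; positivity) (tendsto_twoDivCubeMulPrimitive_atTop A B)]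
  have hBA : B - A ≠ 0 := sub_ne_zero.2 hAB.symm
  simp only [twoDivCubeMulPrimitive, zero_add, zero_sub]
  field_simp
  ring

end RationalIntegral

theorem integral_Ioi_Ioi_sq_div_add_mul_exp {A B : ℝ} (hA : 0 < A) (hB : 0 < B) :
    ∫ x in Ioi (0 : ℝ), ∫ y in Ioi (0 : ℝ), x ^ 2 / (x + y) * exp (-(A * x) - B * y) =
      ∫ t in Ioi (0 : ℝ), 2 / ((t + A) ^ 3 * (t + B)) := by
  have hint := integrableOn_Ioi_two_div_add_pow_three_mul_add hA hB
  have hnonneg : ∀ᵐ x ∂volume.restrict (Ioi (0 : ℝ)), ∀ᵐ y ∂volume.restrict (Ioi (0 : ℝ)),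
      0 ≤ x ^ 2 / (x + y) * exp (-(A * x) - B * y) := by
    filter_upwards [self_mem_ae_restrict measurableSet_Ioi] with x (hx : 0 < x)
    filter_upwards [self_mem_ae_restrict measurableSet_Ioi] with y (hy : 0 < y)
    positivity
  rw [integral_integral_eq_toReal_lintegral_lintegral (by fun_prop) hnonneg,
    lintegral_Ioi_Ioi_sq_div_add_mul_exp hA hB, integral_eq_lintegral_of_nonneg_ae _
      hint.aestronglyMeasurable]
  · filter_upwards [self_mem_ae_restrict measurableSet_Ioi] with t (ht : 0 < t)
    positivity
  · rw [lintegral_Ioi_Ioi_sq_div_add_mul_exp hA hB]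
    exact hint.lintegral_lt_top.ne

/-- The `⟨↑↑|ρ⁽²⁾|↑↑⟩` matrix element of the second moment of the Scrooge ensemble of a
qubit density matrix with eigenvalues `λ, 1−λ`, in Gaussian-integral form. -/
theorem qubit_scrooge_second_moment
    (lam : ℝ) (h0 : 0 < lam) (h1 : lam < 1) (hhalf : lam ≠ 1 / 2) :
    (1 / (lam * (1 - lam))) *
      (∫ x in Set.Ioi (0:ℝ), ∫ y in Set.Ioi (0:ℝ),
        (x ^ 2 / (x + y)) * Real.exp (-x / lam - y / (1 - lam))) =
    lam ^ 2 * (2 * lam * (4 * lam - 5) -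
        2 * (1 - lam) ^ 2 * Real.log ((1 - lam) / lam) + 3) /
      (2 * lam - 1) ^ 3 := by
  have h1' : 0 < 1 - lam := sub_pos.2 h1
  have h2 : 2 * lam - 1 ≠ 0 := fun h => hhalf (by linarith)
  have hexp (x y : ℝ) : -x / lam - y / (1 - lam) = -(lam⁻¹ * x) - (1 - lam)⁻¹ * y := by ring
  have hAB : lam⁻¹ ≠ (1 - lam)⁻¹ := fun h => h2 (by linarith [inv_injective h])
  simp only [hexp]
  rw [integral_Ioi_Ioi_sq_div_add_mul_exp (inv_pos.2 h0) (inv_pos.2 h1'),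
    integral_Ioi_two_div_add_pow_three_mul_add (inv_pos.2 h0) (inv_pos.2 h1') hAB,
    log_inv, log_inv, log_div h1'.ne' h0.ne']
  field_simp
  ring
end

section
/- Let D ≥ 1, let μ be the Haar probability measure on the unitary group of D×D complex matrices, and let ψ ∈ ℂ^D be a unit vector. Then ∫ ∑_{i=1}^D |(Uψ)_i|⁴ dμ(U) = 2/(D + 1). -/
open MeasureTheory Matrix

noncomputable instance matrixMeasurableSpace {m n : Type*} :
    MeasurableSpace (Matrix m n ℂ) :=
  inferInstanceAs (MeasurableSpace (m → n → ℂ))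

/-!
Write `x = Uψ` and `pᵢ = |xᵢ|²`. For `i ≠ j` and `ζ` a fourth root of unity, the Householder reflection
along `eᵢ + 2ζ̄ eⱼ` is a unitary whose `i`-th row is `3/5 eᵢ - 4ζ/5 eⱼ`. By left invariance,
`E pᵢ²` is unchanged when `U` is replaced by this reflection times `U`. Averaging over the four
values of `ζ` cancels the cross terms `Re (ζ xᵢ x̄ⱼ)` and leaves
`625 E pᵢ² = 81 E pᵢ² + 256 E pⱼ² + 576 E pᵢpⱼ`. Together with the same identity for `i` and `j`
swapped, this gives `E pᵢ² = 2 E pᵢpⱼ`. Since `∑ⱼ pⱼ = 1`,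
`E pᵢ = ∑ⱼ E pᵢpⱼ = (D + 1)/2 · E pᵢ²`, and summing over `i` gives `2/(D + 1)`.
-/

open ComplexConjugate

theorem Continuous.integrable_of_compactSpace {X E : Type*} [TopologicalSpace X] [CompactSpace X]
    [MeasurableSpace X] [OpensMeasurableSpace X] [NormedAddCommGroup E] {μ : Measure X}
    [IsFiniteMeasure μ] {f : X → E} (hf : Continuous f) : Integrable f μ :=
  hf.integrable_of_hasCompactSupport (.of_compactSpace f)

theorem Complex.sum_range_four_normSq_sub_sq (s t : ℝ) (a b : ℂ) :
    ∑ k ∈ Finset.range 4, normSq (s * a - t * I ^ k * b) ^ 2 =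
      4 * ((s ^ 2 * normSq a + t ^ 2 * normSq b) ^ 2 + 2 * s ^ 2 * t ^ 2 * normSq a * normSq b) := by
  simp only [Finset.sum_range_succ, Finset.range_zero, Finset.sum_empty, pow_succ, pow_zero,
    normSq_apply, sub_re, mul_re, ofReal_re, ofReal_im, I_re, I_im, sub_im, mul_im, one_re,
    one_im]
  ring

instance {m n : Type*} [Countable m] [Countable n] : BorelSpace (Matrix m n ℂ) :=
  inferInstanceAs (BorelSpace (m → n → ℂ))

variable {n : Type*} [Fintype n] [DecidableEq n]

theorem Matrix.isCompact_unitaryGroup : IsCompact (unitaryGroup n ℂ : Set (Matrix n n ℂ)) := by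
  refine IsCompact.of_isClosed_subset (isCompact_univ_pi fun i => isCompact_univ_pi fun j =>
    isCompact_closedBall (0 : ℂ) 1) isClosed_unitary ?_
  intro U hU i _ j _
  simpa using entry_norm_bound_of_unitary hU i j

instance : CompactSpace (unitaryGroup n ℂ) := isCompact_iff_compactSpace.mp isCompact_unitaryGroup

theorem Matrix.UnitaryGroup.star_mulVec_dotProduct_mulVec {α : Type*} [CommRing α] [StarRing α]
    (U : unitaryGroup n α) (x : n → α) :
    star ((U : Matrix n n α) *ᵥ x) ⬝ᵥ ((U : Matrix n n α) *ᵥ x) = star x ⬝ᵥ x := by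
  rw [star_mulVec, dotProduct_mulVec, vecMul_vecMul, ← star_eq_conjTranspose,
    UnitaryGroup.star_mul_self, vecMul_one]

section Householder

variable {𝕜 : Type*} [RCLike 𝕜]

/-- For `v = 0` the junk value `2 / 0 = 0` makes this the identity. -/
noncomputable def Matrix.householder (v : n → 𝕜) : Matrix n n 𝕜 :=
  1 - (2 / (star v ⬝ᵥ v)) • vecMulVec v (star v)

theorem Matrix.householder_mulVec (v x : n → 𝕜) :
    householder v *ᵥ x = x - (2 / (star v ⬝ᵥ v) * (star v ⬝ᵥ x)) • v := by
  ext i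
  simp only [householder, sub_mulVec, one_mulVec, smul_mulVec, vecMulVec_mulVec, Pi.sub_apply,
    Pi.smul_apply, op_smul_eq_mul, smul_eq_mul]
  ring

theorem Matrix.householder_mem_unitaryGroup (v : n → 𝕜) : householder v ∈ unitaryGroup n 𝕜 := by
  have hr : star (star v ⬝ᵥ v) = star v ⬝ᵥ v := (star_dotProduct v v).symm
  have hc : 2 / (star v ⬝ᵥ v) * (2 / (star v ⬝ᵥ v)) * (star v ⬝ᵥ v) = 2 * (2 / (star v ⬝ᵥ v)) := by
    rcases eq_or_ne (star v ⬝ᵥ v) 0 with h | h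
    · simp [h]
    · field_simp
  have hH : star (householder v) = householder v := by
    rw [householder, star_sub, star_one, star_smul, star_eq_conjTranspose, conjTranspose_vecMulVec,
      star_star, star_div₀, hr]
    simp
  rw [mem_unitaryGroup_iff, hH, householder, sub_mul, mul_sub, mul_sub, smul_mul_smul,
    vecMulVec_mul_vecMulVec, vecMulVec_smul, smul_smul, hc]
  simp only [one_mul, mul_one, mul_smul, two_smul]
  abel

end Householder

theorem Matrix.householder_single_add_single_mulVec_apply {i j : n} (hij : i ≠ j) {ζ : ℂ}
    (hζ : ‖ζ‖ = 1) (x : n → ℂ) :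
    (householder (Pi.single i 1 + Pi.single j (2 * conj ζ)) *ᵥ x) i =
      3 / 5 * x i - 4 / 5 * ζ * x j := by
  have h5 : star (Pi.single i 1 + Pi.single j (2 * conj ζ)) ⬝ᵥ
      (Pi.single i 1 + Pi.single j (2 * conj ζ)) = (5 : ℂ) := by
    have hζ' : ζ * conj ζ = 1 := by
      rw [Complex.mul_conj, Complex.normSq_eq_norm_sq, hζ]
      norm_num
    simp only [star_add, Pi.star_single, star_one, star_mul', star_ofNat, RCLike.star_def,
      RingHomCompTriple.comp_apply, RingHom.id_apply, dotProduct_add, dotProduct_single,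
      Pi.add_apply, Pi.single_eq_same, ne_eq, hij, not_false_eq_true, Pi.single_eq_of_ne, add_zero,
      mul_one, hij.symm, zero_add]
    linear_combination 4 * hζ'
  rw [householder_mulVec, h5]
  simp only [star_add, Pi.star_single, star_one, star_mul', star_ofNat, RCLike.star_def,
    RingHomCompTriple.comp_apply, RingHom.id_apply, add_dotProduct, single_dotProduct, one_mul,
    smul_add, Pi.sub_apply, Pi.add_apply, Pi.smul_apply, Pi.single_eq_same, smul_eq_mul, mul_one,
    ne_eq, hij, not_false_eq_true, Pi.single_eq_of_ne, mul_zero, add_zero]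
  ring

noncomputable def diagWeight (ψ : n → ℂ) (i : n) (U : unitaryGroup n ℂ) : ℝ :=
  Complex.normSq (((U : Matrix n n ℂ) *ᵥ ψ) i)

@[fun_prop]
theorem continuous_diagWeight (ψ : n → ℂ) (i : n) : Continuous (diagWeight ψ i) := by
  unfold diagWeight
  fun_prop

theorem sum_diagWeight (ψ : n → ℂ) (U : unitaryGroup n ℂ) :
    ∑ i, diagWeight ψ i U = ∑ i, Complex.normSq (ψ i) := by
  have h := UnitaryGroup.star_mulVec_dotProduct_mulVec U ψ
  simp only [dotProduct, Pi.star_apply, Complex.star_def, ← Complex.normSq_eq_conj_mul_self] at h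
  exact_mod_cast h

section Moments

variable (μ : Measure (unitaryGroup n ℂ)) [IsFiniteMeasure μ] [μ.IsMulLeftInvariant] (ψ : n → ℂ)

theorem integral_diagWeight_sq_householder_identity {i j : n} (hij : i ≠ j) :
    625 * ∫ U, diagWeight ψ i U ^ 2 ∂μ =
      81 * ∫ U, diagWeight ψ i U ^ 2 ∂μ + 256 * ∫ U, diagWeight ψ j U ^ 2 ∂μ +
        576 * ∫ U, diagWeight ψ i U * diagWeight ψ j U ∂μ := by
  let W : ℕ → unitaryGroup n ℂ := fun k =>
    ⟨householder (Pi.single i 1 + Pi.single j (2 * conj (Complex.I ^ k))),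
      householder_mem_unitaryGroup _⟩
  have hW : ∀ k U, diagWeight ψ i (W k * U) = Complex.normSq
      (3 / 5 * ((U : Matrix n n ℂ) *ᵥ ψ) i - 4 / 5 * Complex.I ^ k * ((U : Matrix n n ℂ) *ᵥ ψ) j) :=
    fun k U => by
      rw [diagWeight, UnitaryGroup.mul_val, ← mulVec_mulVec,
        householder_single_add_single_mulVec_apply hij (by simp)]
  have hsum : ∀ U, ∑ k ∈ Finset.range 4, diagWeight ψ i (W k * U) ^ 2 =
      4 / 625 * (81 * diagWeight ψ i U ^ 2 + 256 * diagWeight ψ j U ^ 2 +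
        576 * (diagWeight ψ i U * diagWeight ψ j U)) := by
    intro U
    have h := Complex.sum_range_four_normSq_sub_sq (3 / 5) (4 / 5) (((U : Matrix n n ℂ) *ᵥ ψ) i)
      (((U : Matrix n n ℂ) *ᵥ ψ) j)
    push_cast at h
    simp only [hW, h]
    unfold diagWeight
    ring
  have haverage : 4 * ∫ U, diagWeight ψ i U ^ 2 ∂μ = 4 / 625 * (81 * ∫ U, diagWeight ψ i U ^ 2 ∂μ +
      256 * ∫ U, diagWeight ψ j U ^ 2 ∂μ + 576 * ∫ U, diagWeight ψ i U * diagWeight ψ j U ∂μ) :=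
    calc 4 * ∫ U, diagWeight ψ i U ^ 2 ∂μ
        = ∑ k ∈ Finset.range 4, ∫ U, diagWeight ψ i (W k * U) ^ 2 ∂μ := by
          simp [integral_mul_left_eq_self (fun U => diagWeight ψ i U ^ 2)]
      _ = ∫ U, ∑ k ∈ Finset.range 4, diagWeight ψ i (W k * U) ^ 2 ∂μ :=
          (integral_finsetSum _ fun k _ =>
            (by fun_prop : Continuous _).integrable_of_compactSpace).symm
      _ = _ := by
          rw [integral_congr_ae (.of_forall hsum), integral_const_mul, integral_add,
            integral_add, integral_const_mul, integral_const_mul, integral_const_mul]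
          all_goals exact (by fun_prop : Continuous _).integrable_of_compactSpace
  linarith

theorem integral_diagWeight_sq_eq_two_mul {i j : n} (hij : i ≠ j) :
    ∫ U, diagWeight ψ i U ^ 2 ∂μ = 2 * ∫ U, diagWeight ψ i U * diagWeight ψ j U ∂μ := by
  have hij' := integral_diagWeight_sq_householder_identity μ ψ hij
  have hji := integral_diagWeight_sq_householder_identity μ ψ hij.symm
  have hcomm : ∫ U, diagWeight ψ j U * diagWeight ψ i U ∂μ =
      ∫ U, diagWeight ψ i U * diagWeight ψ j U ∂μ := by
    simp_rw [mul_comm]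
  linarith

theorem card_add_one_mul_integral_diagWeight_sq (hψ : ∑ i, Complex.normSq (ψ i) = 1) (i : n) :
    (Fintype.card n + 1) * ∫ U, diagWeight ψ i U ^ 2 ∂μ = 2 * ∫ U, diagWeight ψ i U ∂μ := by
  set α := ∫ U, diagWeight ψ i U ^ 2 ∂μ
  calc (Fintype.card n + 1) * α = ∑ j, (α + if j = i then α else 0) := by
        rw [Finset.sum_add_distrib, Finset.sum_ite_eq', if_pos (Finset.mem_univ i),
          Finset.sum_const, Finset.card_univ, nsmul_eq_mul]
        ring
    _ = ∑ j, 2 * ∫ U, diagWeight ψ i U * diagWeight ψ j U ∂μ := by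
        refine Finset.sum_congr rfl fun j _ => ?_
        split_ifs with h
        · simp only [α, h, sq]
          ring
        · exact (add_zero α).trans (integral_diagWeight_sq_eq_two_mul μ ψ (Ne.symm h))
    _ = 2 * ∫ U, diagWeight ψ i U * ∑ j, diagWeight ψ j U ∂μ := by
        rw [← Finset.mul_sum, ← integral_finsetSum _ fun j _ =>
          (by fun_prop : Continuous _).integrable_of_compactSpace]
        simp only [Finset.mul_sum]
    _ = 2 * ∫ U, diagWeight ψ i U ∂μ := by
        simp only [sum_diagWeight, hψ, mul_one]

end Moments

theorem integral_sum_diagWeight_sq (μ : Measure (unitaryGroup n ℂ)) [IsProbabilityMeasure μ]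
    [μ.IsMulLeftInvariant] (ψ : n → ℂ) (hψ : ∑ i, Complex.normSq (ψ i) = 1) :
    ∫ U, ∑ i, diagWeight ψ i U ^ 2 ∂μ = 2 / (Fintype.card n + 1) := by
  have h : ∀ i, ∫ U, diagWeight ψ i U ^ 2 ∂μ =
      2 / (Fintype.card n + 1) * ∫ U, diagWeight ψ i U ∂μ := fun i => by
    rw [div_mul_eq_mul_div, eq_div_iff (by positivity), mul_comm,
      card_add_one_mul_integral_diagWeight_sq μ ψ hψ]
  rw [integral_finsetSum _ fun i _ => (by fun_prop : Continuous _).integrable_of_compactSpace]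
  simp_rw [h, ← Finset.mul_sum]
  rw [← integral_finsetSum _ fun i _ => (by fun_prop : Continuous _).integrable_of_compactSpace]
  simp [sum_diagWeight, hψ]

theorem haar_average_purity_general
    (D : ℕ)
    (μ : Measure (Matrix.unitaryGroup (Fin D) ℂ)) [IsProbabilityMeasure μ]
    (hinv : ∀ U : Matrix.unitaryGroup (Fin D) ℂ,
      Measure.map (fun V : Matrix.unitaryGroup (Fin D) ℂ => U * V) μ = μ)
    (ψ : Fin D → ℂ) (hψ : (∑ i, Complex.normSq (ψ i)) = 1) :
    (∫ U : Matrix.unitaryGroup (Fin D) ℂ,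
        ∑ i, (Complex.normSq (((U : Matrix (Fin D) (Fin D) ℂ).mulVec ψ) i)) ^ 2 ∂μ) =
      2 / (D + 1) := by
  have : μ.IsMulLeftInvariant := ⟨hinv⟩
  simpa only [diagWeight, Fintype.card_fin] using integral_sum_diagWeight_sq μ ψ hψ

/-- Haar average of the purity of the diagonal ensemble: for the Haar (i.e. the
left-translation-invariant) probability measure `μ` on the unitary group `U(D)` and a
unit vector `ψ ∈ ℂ^D`, `∫ ∑ᵢ |(Uψ)ᵢ|⁴ dμ(U) = 2/(D+1)`. -/
theorem haar_average_purity
    (D : ℕ) (hD : 1 ≤ D)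
    (μ : Measure (Matrix.unitaryGroup (Fin D) ℂ)) [IsProbabilityMeasure μ]
    (hinv : ∀ U : Matrix.unitaryGroup (Fin D) ℂ,
      Measure.map (fun V : Matrix.unitaryGroup (Fin D) ℂ => U * V) μ = μ)
    (ψ : Fin D → ℂ) (hψ : (∑ i, Complex.normSq (ψ i)) = 1) :
    (∫ U : Matrix.unitaryGroup (Fin D) ℂ,
        ∑ i, (Complex.normSq (((U : Matrix (Fin D) (Fin D) ℂ).mulVec ψ) i)) ^ 2 ∂μ) =
      2 / (D + 1) :=
  haar_average_purity_general D μ hinv ψ hψ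
end

section
/- Let τ > 0 and γ > 0. Then ∫_{−∞}^{∞} (sin(u·τ)/(u·τ))² · exp(−γ·u²) du = (2√π/τ) · ∫₀^{τ/√γ} exp(−s²) ds − (√(π·γ)/τ²) · (1 − exp(−τ²/γ)). -/
/-!
Since `(1 - cos (2τu)) / u² = ∫₀^{2τ} (2τ - x) cos (xu) dx`, the function `sinc² (uτ)` is a
cosine transform of the triangle `x ↦ 2τ - x` on `[0, 2τ]`. Exchanging the two integrals, the
`u`-integral becomes the Fourier transform of the Gaussian, `√(π/γ) e^{-x²/(4γ)}`, and what is
left is the triangle integrated against a Gaussian: its constant part gives the error-function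
term, its linear part the elementary term `2γ (1 - e^{-τ²/γ})`.
-/

open MeasureTheory Real

lemma integral_exp_neg_mul_sq_mul_cos {γ : ℝ} (hγ : 0 < γ) (c : ℝ) :
    ∫ u : ℝ, exp (-γ * u ^ 2) * cos (c * u) = √(π / γ) * exp (-c ^ 2 / (4 * γ)) := by
  have hb : (-(γ : ℂ)).re < 0 := by simpa using hγ
  have hre (u : ℝ) : (Complex.exp (-γ * u ^ 2 + (c * Complex.I) * u + 0)).re =
      exp (-γ * u ^ 2) * cos (c * u) := by
    rw [add_zero, Complex.exp_add, ← Complex.ofReal_pow, ← Complex.ofReal_neg,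
      ← Complex.ofReal_mul, ← Complex.ofReal_exp, mul_right_comm, ← Complex.ofReal_mul,
      Complex.re_ofReal_mul, Complex.exp_ofReal_mul_I_re]
  have hsqrt : (π / -(-(γ : ℂ))) ^ (1 / 2 : ℂ) = ((√(π / γ) : ℝ) : ℂ) := by
    rw [neg_neg, ← Complex.ofReal_div, sqrt_eq_rpow, Complex.ofReal_cpow (by positivity)]
    norm_num
  have hexp : Complex.exp (0 - (c * Complex.I) ^ 2 / (4 * -(γ : ℂ))) =
      ((exp (-c ^ 2 / (4 * γ)) : ℝ) : ℂ) := by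
    rw [Complex.ofReal_exp]
    congr 1
    push_cast
    linear_combination (c : ℂ) ^ 2 / (4 * γ) * Complex.I_sq
  have h := integral_re (integrable_cexp_quadratic' hb (c * Complex.I) 0)
  simp only [RCLike.re_to_complex, hre, integral_cexp_quadratic hb, hsqrt, hexp] at h
  rw [h, ← Complex.ofReal_mul, Complex.ofReal_re]

lemma integral_sub_mul_cos_mul (a : ℝ) {u : ℝ} (hu : u ≠ 0) :
    ∫ x in (0 : ℝ)..a, (a - x) * cos (x * u) = (1 - cos (a * u)) / u ^ 2 := by
  have hderiv (x : ℝ) : HasDerivAt (fun x => (a - x) * sin (x * u) / u - cos (x * u) / u ^ 2)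
      ((a - x) * cos (x * u)) x := by
    have hxu : HasDerivAt (fun x : ℝ => x * u) u x := hasDerivAt_mul_const u
    refine (((((hasDerivAt_id' x).const_sub a).mul hxu.sin).div_const u).sub
      (hxu.cos.div_const (u ^ 2))).congr_deriv ?_
    field_simp
    ring
  rw [intervalIntegral.integral_eq_sub_of_hasDerivAt (fun x _ => hderiv x)
    (by apply Continuous.intervalIntegrable; fun_prop)]
  field_simp
  simp only [sub_self, mul_zero, zero_mul, zero_sub, sub_zero, sin_zero, cos_zero,
    sub_neg_eq_add]
  ring

lemma sinc_sq_eq_intervalIntegral {τ u : ℝ} (hτ : τ ≠ 0) (hu : u ≠ 0) :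
    (sin (u * τ) / (u * τ)) ^ 2 =
      (2 * τ ^ 2)⁻¹ * ∫ x in (0 : ℝ)..2 * τ, (2 * τ - x) * cos (x * u) := by
  rw [integral_sub_mul_cos_mul _ hu, div_pow, sin_sq_eq_half_sub,
    show 2 * τ * u = 2 * (u * τ) by ring]
  field_simp

lemma integral_mul_intervalIntegral_mul_cos_swap {f g : ℝ → ℝ} {a : ℝ} (hf : Integrable f)
    (hg : IntervalIntegrable g volume 0 a) :
    ∫ u, f u * ∫ x in (0 : ℝ)..a, g x * cos (x * u) =
      ∫ x in (0 : ℝ)..a, g x * ∫ u, f u * cos (x * u) := by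
  have hl (u : ℝ) : f u * ∫ x in (0 : ℝ)..a, g x * cos (x * u) =
      ∫ x in (0 : ℝ)..a, g x * (f u * cos (x * u)) := by
    rw [← intervalIntegral.integral_const_mul]
    exact intervalIntegral.integral_congr fun x _ => by ring
  simp_rw [hl, ← integral_const_mul (μ := volume)]
  refine (intervalIntegral_integral_swap (f := fun x u => g x * (f u * cos (x * u))) ?_).symm
  have hprod := (intervalIntegrable_iff.mp hg).mul_prod hf
  refine (hprod.bdd_mul (f := fun p : ℝ × ℝ => cos (p.1 * p.2)) (c := 1)
    (by fun_prop) (ae_of_all _ fun p => by simpa using abs_cos_le_one _)).congr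
    (ae_of_all _ fun ⟨x, u⟩ => ?_)
  simp only [Function.uncurry_apply_pair]
  ring

lemma intervalIntegral_mul_exp_neg_div_sq {σ : ℝ} (hσ : σ ≠ 0) (b : ℝ) :
    ∫ x in (0 : ℝ)..b, x * exp (-(x / σ) ^ 2) = σ ^ 2 / 2 * (1 - exp (-(b / σ) ^ 2)) := by
  have hderiv (x : ℝ) : HasDerivAt (fun x => -σ ^ 2 / 2 * exp (-(x / σ) ^ 2))
      (x * exp (-(x / σ) ^ 2)) x := by
    refine ((((hasDerivAt_id' x).div_const σ).pow 2).neg.exp.const_mul _).congr_deriv ?_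
    simp only [Pi.neg_apply, Pi.pow_apply, Nat.cast_ofNat, Nat.add_one_sub_one, pow_one]
    field_simp
  rw [intervalIntegral.integral_eq_sub_of_hasDerivAt (fun x _ => hderiv x)
    (by apply Continuous.intervalIntegrable; fun_prop)]
  simp only [zero_div, ne_eq, OfNat.ofNat_ne_zero, not_false_eq_true, zero_pow, neg_zero,
    exp_zero, mul_one]
  ring

lemma intervalIntegral_exp_neg_div_sq {σ : ℝ} (hσ : σ ≠ 0) (b : ℝ) :
    ∫ x in (0 : ℝ)..b, exp (-(x / σ) ^ 2) = σ * ∫ s in (0 : ℝ)..b / σ, exp (-s ^ 2) := by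
  simp [intervalIntegral.integral_comp_div (fun s => exp (-s ^ 2)) hσ]

lemma intervalIntegral_sub_mul_exp_neg_div_sq {σ : ℝ} (hσ : σ ≠ 0) (a : ℝ) :
    ∫ x in (0 : ℝ)..a, (a - x) * exp (-(x / σ) ^ 2) =
      a * σ * (∫ s in (0 : ℝ)..a / σ, exp (-s ^ 2)) - σ ^ 2 / 2 * (1 - exp (-(a / σ) ^ 2)) := by
  simp_rw [sub_mul]
  rw [intervalIntegral.integral_sub (by apply Continuous.intervalIntegrable; fun_prop)
      (by apply Continuous.intervalIntegrable; fun_prop),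
    intervalIntegral.integral_const_mul, intervalIntegral_exp_neg_div_sq hσ,
    intervalIntegral_mul_exp_neg_div_sq hσ, mul_assoc]

/-- Exact evaluation of the sinc²-against-Gaussian integral appearing in the
finite-interval correction to the temporal mutual information:
`∫_{−∞}^{∞} (sin(uτ)/(uτ))² e^{−γu²} du
  = (2√π/τ) ∫₀^{τ/√γ} e^{−s²} ds − (√(πγ)/τ²)(1 − e^{−τ²/γ})`. -/
theorem sinc_sq_gaussian_integral (τ γ : ℝ) (hτ : 0 < τ) (hγ : 0 < γ) :
    (∫ u : ℝ, (Real.sin (u * τ) / (u * τ)) ^ 2 * Real.exp (-γ * u ^ 2)) =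
      (2 * Real.sqrt Real.pi / τ) *
          (∫ s in (0:ℝ)..(τ / Real.sqrt γ), Real.exp (-s ^ 2)) -
        (Real.sqrt (Real.pi * γ) / τ ^ 2) * (1 - Real.exp (-τ ^ 2 / γ)) := by
  have hsγ : 0 < √γ := sqrt_pos.mpr hγ
  have hgauss (x : ℝ) : exp (-x ^ 2 / (4 * γ)) = exp (-(x / (2 * √γ)) ^ 2) := by
    rw [div_pow, mul_pow, sq_sqrt hγ.le]
    ring_nf
  have hsinc : (fun u => (sin (u * τ) / (u * τ)) ^ 2 * exp (-γ * u ^ 2)) =ᵐ[volume]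
      fun u => (2 * τ ^ 2)⁻¹ * (exp (-γ * u ^ 2) *
        ∫ x in (0 : ℝ)..2 * τ, (2 * τ - x) * cos (x * u)) := by
    filter_upwards [volume.ae_ne (0 : ℝ)] with u hu
    rw [sinc_sq_eq_intervalIntegral hτ.ne' hu]
    ring
  rw [integral_congr_ae hsinc, integral_const_mul,
    integral_mul_intervalIntegral_mul_cos_swap (integrable_exp_neg_mul_sq hγ)
      (by apply Continuous.intervalIntegrable; fun_prop)]
  simp_rw [integral_exp_neg_mul_sq_mul_cos hγ, hgauss, mul_left_comm _ √(π / γ),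
    intervalIntegral.integral_const_mul,
    intervalIntegral_sub_mul_exp_neg_div_sq (by positivity : 2 * √γ ≠ 0),
    mul_div_mul_left τ √γ (two_ne_zero' ℝ), div_pow, sq_sqrt hγ.le]
  rw [sqrt_mul pi_pos.le, sqrt_div pi_pos.le]
  field_simp
end
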